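/- arXiv:2101.03311 — 5 statements merged into one kernel-verified Lean document; each statement's English description precedes it below -/
import Mathlib

section
/- Let D > 0 and x* > 0. The function W⁺(x) = (c₀ - 1) cosh(x/D)/cosh(x*/D) + 1 solves D²W'' + 1 - W = 0 on (0, x*) with W'(0) = 0 and W(x*) = c₀, the function W⁻(x) = (c₀ + 1) e^{(x* - x)/D} - 1 solves D²W'' - 1 - W = 0 on (x*, ∞) with W(x*) = c₀ and W(∞) = -1, and the C¹-matching condition W⁺'(x*) = W⁻'(x*) holds if and only if c₀ = -e^{-2x*/D}. -/
open Real Filter Topology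

theorem stmt3 (D xs c₀ : ℝ) (hD : 0 < D) (hx : 0 < xs) :
    let Wp : ℝ → ℝ := fun x => (c₀ - 1) * Real.cosh (x / D) / Real.cosh (xs / D) + 1
    let Wm : ℝ → ℝ := fun x => (c₀ + 1) * Real.exp ((xs - x) / D) - 1
    (∀ x ∈ Set.Ioo 0 xs, D ^ 2 * deriv (deriv Wp) x + 1 - Wp x = 0) ∧
    deriv Wp 0 = 0 ∧ Wp xs = c₀ ∧
    (∀ x ∈ Set.Ioi xs, D ^ 2 * deriv (deriv Wm) x - 1 - Wm x = 0) ∧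
    Wm xs = c₀ ∧ Tendsto Wm atTop (nhds (-1)) ∧
    (deriv Wp xs = deriv Wm xs ↔ c₀ = -Real.exp (-2 * xs / D)) := by
  intro Wp Wm
  have hD0 : D ≠ 0 := ne_of_gt hD
  have hid : ∀ x : ℝ, HasDerivAt (fun y : ℝ => y / D) (1 / D) x := by
    intro x
    simpa using (hasDerivAt_id x).div_const D
  have hid2 : ∀ x : ℝ, HasDerivAt (fun y : ℝ => (xs - y) / D) (-(1 / D)) x := by
    intro x
    simpa [neg_div] using ((hasDerivAt_id x).const_sub xs).div_const D
  have hWp1 : ∀ x : ℝ, HasDerivAt Wp ((c₀ - 1) * (Real.sinh (x / D) * (1 / D)) / Real.cosh (xs / D)) x := by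
    intro x
    exact ((((Real.hasDerivAt_cosh (x / D)).comp x (hid x)).const_mul (c₀ - 1)).div_const
      (Real.cosh (xs / D))).add_const 1
  have hdWp : deriv Wp = fun x => (c₀ - 1) * (Real.sinh (x / D) * (1 / D)) / Real.cosh (xs / D) := by
    funext x; exact (hWp1 x).deriv
  have hWp2 : ∀ x : ℝ, HasDerivAt (deriv Wp)
      ((c₀ - 1) * (Real.cosh (x / D) * (1 / D) * (1 / D)) / Real.cosh (xs / D)) x := by
    intro x
    rw [hdWp]
    exact ((((Real.hasDerivAt_sinh (x / D)).comp x (hid x)).mul_const (1 / D)).const_mul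
      (c₀ - 1)).div_const (Real.cosh (xs / D))
  have hWm1 : ∀ x : ℝ, HasDerivAt Wm ((c₀ + 1) * (Real.exp ((xs - x) / D) * -(1 / D))) x := by
    intro x
    exact (((Real.hasDerivAt_exp ((xs - x) / D)).comp x (hid2 x)).const_mul (c₀ + 1)).sub_const 1
  have hdWm : deriv Wm = fun x => (c₀ + 1) * (Real.exp ((xs - x) / D) * -(1 / D)) := by
    funext x; exact (hWm1 x).deriv
  have hWm2 : ∀ x : ℝ, HasDerivAt (deriv Wm)
      ((c₀ + 1) * (Real.exp ((xs - x) / D) * -(1 / D) * -(1 / D))) x := by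
    intro x
    rw [hdWm]
    have := (((Real.hasDerivAt_exp ((xs - x) / D)).comp x (hid2 x)).mul_const (-(1 / D))).const_mul (c₀ + 1)
    exact this
  have hcosh : Real.cosh (xs / D) ≠ 0 := ne_of_gt (Real.cosh_pos _)
  refine ⟨?_, ?_, ?_, ?_, ?_, ?_, ?_⟩
  · intro x _
    rw [(hWp2 x).deriv]
    simp only [Wp]
    field_simp
    ring
  · rw [hdWp]; simp
  · simp only [Wp]
    field_simp
    ring
  · intro x _
    rw [(hWm2 x).deriv]
    simp only [Wm]
    field_simp
    ring
  · simp only [Wm]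
    simp
  · have : Tendsto (fun x : ℝ => (xs - x) / D) atTop atBot := by
      apply Tendsto.atBot_div_const hD
      simpa only [← sub_eq_add_neg] using tendsto_atBot_add_const_left atTop xs (tendsto_neg_atTop_atBot : Tendsto (fun x : ℝ => -x) atTop atBot)
    have h2 : Tendsto (fun x : ℝ => (c₀ + 1) * Real.exp ((xs - x) / D)) atTop (nhds 0) := by
      simpa using (Real.tendsto_exp_atBot.comp this).const_mul (c₀ + 1)
    have := h2.sub_const 1
    simpa using this
  · rw [hdWp, hdWm]
    simp only [sub_self, zero_div, Real.exp_zero, mul_one, div_self hcosh]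
    have ha : Real.exp (xs / D) > 0 := Real.exp_pos _
    rw [Real.sinh_eq, Real.cosh_eq]
    have hexp : Real.exp (-2 * xs / D) = (Real.exp (xs / D) * Real.exp (xs / D))⁻¹ := by
      rw [← Real.exp_add, ← Real.exp_neg]; ring_nf
    rw [hexp]
    have hne : Real.exp (xs / D) ≠ 0 := ne_of_gt ha
    rw [Real.exp_neg]
    set a := Real.exp (xs / D) with hadef
    constructor
    · intro h
      field_simp at h ⊢
      have h2 : (c₀ * (a * a) + 1) * (4 * a * D) = 0 := by linear_combination (2 * a * D) * h
      rcases mul_eq_zero.1 h2 with h3 | h3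
      · linarith
      · exfalso
        have : (0:ℝ) < 4 * a * D := by positivity
        linarith
    · intro h
      field_simp at h ⊢
      linear_combination 2 * h
end

section
/- For 0 ≤ z < π/4 and d > 0, define X = d cos z/√(cos 2z), Y = d sin z/√(cos 2z), and R(z;d) = (1/d)√(cos 2z)[cos z + e^{-X} cos(Y + z)]. Then R(z;d) > 0. -/
open Real

theorem stmt12 (d : ℝ) (hd : 0 < d) (z : ℝ) (hz : z ∈ Set.Ico 0 (π / 4)) :
    let X : ℝ := d * Real.cos z / Real.sqrt (Real.cos (2 * z))
    let Y : ℝ := d * Real.sin z / Real.sqrt (Real.cos (2 * z))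
    0 < (1 / d) * Real.sqrt (Real.cos (2 * z)) *
      (Real.cos z + Real.exp (-X) * Real.cos (Y + z)) := by
  intro X Y
  obtain ⟨hz0, hz1⟩ := hz
  have hpi : (0:ℝ) < π := Real.pi_pos
  have hcos2 : 0 < Real.cos (2 * z) := by
    apply Real.cos_pos_of_mem_Ioo
    constructor <;> [linarith; linarith]
  have hs : 0 < Real.sqrt (Real.cos (2 * z)) := Real.sqrt_pos.mpr hcos2
  have hcz : 0 < Real.cos z := by
    apply Real.cos_pos_of_mem_Ioo
    constructor <;> [linarith; linarith]
  have hsz : 0 ≤ Real.sin z := Real.sin_nonneg_of_nonneg_of_le_pi hz0 (by linarith)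
  have hY0 : 0 ≤ Y := div_nonneg (by positivity) hs.le
  have hmain : 0 < Real.cos z + Real.exp (-X) * Real.cos (Y + z) := by
    by_cases h : Y + z < π / 2
    · have hc : 0 ≤ Real.cos (Y + z) := by
        apply Real.cos_nonneg_of_mem_Icc
        constructor <;> [linarith; linarith]
      have := mul_nonneg (Real.exp_pos (-X)).le hc
      linarith
    · push_neg at h
      have hYgt : π / 4 < Y := by linarith
      have hscz : Real.sin z ≤ Real.cos z := by
        have : Real.sin z = Real.cos (π / 2 - z) := (Real.cos_pi_div_two_sub z).symm
        rw [this]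
        apply Real.cos_le_cos_of_nonneg_of_le_pi hz0 (by linarith) (by linarith)
      have hXY : Y ≤ X := by
        have : d * Real.sin z ≤ d * Real.cos z := mul_le_mul_of_nonneg_left hscz hd.le
        exact div_le_div_of_nonneg_right this hs.le
      have hcz2 : Real.sqrt 2 / 2 ≤ Real.cos z := by
        have h2 : Real.cos (π / 4) ≤ Real.cos z :=
          Real.cos_le_cos_of_nonneg_of_le_pi hz0 (by linarith) hz1.le
        rwa [Real.cos_pi_div_four] at h2
      have hexp : Real.exp (-X) < Real.sqrt 2 / 2 := by
        have h1 : Real.exp (-X) ≤ Real.exp (-Y) := Real.exp_le_exp.mpr (by linarith)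
        have h2 : Real.exp (-Y) < Real.exp (-(π / 4)) := Real.exp_lt_exp.mpr (by linarith)
        have h3 : Real.sqrt 2 < Real.exp (π / 4) := by
          have h4 : Real.sqrt 2 < 1 + π / 4 := by
            have : Real.sqrt 2 < 3 / 2 := by
              rw [show (3:ℝ)/2 = Real.sqrt ((3/2)^2) by rw [Real.sqrt_sq]; norm_num]
              exact Real.sqrt_lt_sqrt (by norm_num) (by norm_num)
            nlinarith [Real.pi_gt_three]
          have h5 : 1 + π / 4 ≤ Real.exp (π / 4) := by
            linarith [Real.add_one_le_exp (π / 4)]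
          linarith
        have h6 : Real.exp (-(π / 4)) < Real.sqrt 2 / 2 := by
          rw [Real.exp_neg]
          rw [inv_lt_iff_one_lt_mul₀ (Real.exp_pos _)]
          have hs2 : (0:ℝ) < Real.sqrt 2 := by positivity
          have : Real.sqrt 2 * Real.sqrt 2 = 2 := Real.mul_self_sqrt (by norm_num)
          nlinarith
        linarith
      have hc1 : -1 ≤ Real.cos (Y + z) := Real.neg_one_le_cos (Y + z)
      nlinarith [Real.exp_pos (-X)]
  positivity
end

section
/- For 0 < z < π/4 and d > 0, define X = d cos z/√(cos 2z), Y = d sin z/√(cos 2z), and I(z;d) = -(1/d)√(cos 2z)[sin z + e^{-X} sin(Y + z)]. Then I(z;d) < 0, and I(0;d) = 0. -/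
open Real

theorem stmt13 (d : ℝ) (hd : 0 < d) :
    let I : ℝ → ℝ := fun z =>
      -(1 / d) * Real.sqrt (Real.cos (2 * z)) *
        (Real.sin z + Real.exp (-(d * Real.cos z / Real.sqrt (Real.cos (2 * z)))) *
          Real.sin (d * Real.sin z / Real.sqrt (Real.cos (2 * z)) + z))
    (∀ z ∈ Set.Ioo 0 (π / 4), I z < 0) ∧ I 0 = 0 := by
  intro I
  constructor
  · intro z hz
    obtain ⟨hz0, hz4⟩ := hz
    have hπ := Real.pi_pos
    simp only [I]
    have hc : 0 < Real.cos (2 * z) :=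
      Real.cos_pos_of_mem_Ioo ⟨by linarith, by linarith⟩
    set s := Real.sqrt (Real.cos (2 * z)) with hs_def
    have hs : 0 < s := Real.sqrt_pos.mpr hc
    have hsz : 0 < Real.sin z := Real.sin_pos_of_pos_of_lt_pi hz0 (by linarith)
    have hcz : 0 < Real.cos z :=
      Real.cos_pos_of_mem_Ioo ⟨by linarith, by linarith⟩
    set X := d * Real.cos z / s with hX_def
    set Y := d * Real.sin z / s with hY_def
    have hX : 0 < X := by positivity
    have hY : 0 < Y := by positivity
    have key : 0 < Real.sin z + Real.exp (-X) * Real.sin (Y + z) := by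
      rcases lt_or_ge (Y + z) π with h | h
      · have h1 : 0 < Real.sin (Y + z) :=
          Real.sin_pos_of_pos_of_lt_pi (by positivity) h
        positivity
      · have hY34 : 3 * π / 4 < Y := by linarith
        have hcos : Real.sqrt 2 / 2 < Real.cos z := by
          have := Real.cos_pi_div_four ▸
            Real.cos_lt_cos_of_nonneg_of_le_pi hz0.le (by linarith) hz4
          linarith
        have hXsin : X * Real.sin z = Y * Real.cos z := by
          rw [hX_def, hY_def]; ring
        have hsqrt2 : (1.4 : ℝ) < Real.sqrt 2 := by
          nlinarith [Real.sq_sqrt (by norm_num : (2:ℝ) ≥ 0), Real.sqrt_nonneg 2]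
        have h1 : 1 < Real.exp 1 * (X * Real.sin z) := by
          rw [hXsin]
          have hY2 : (2 : ℝ) < Y := by nlinarith [Real.pi_gt_three]
          have hc7 : (0.7 : ℝ) < Real.cos z := by linarith
          have hYc : (1.4 : ℝ) < Y * Real.cos z := by nlinarith
          nlinarith [Real.exp_one_gt_d9]
        have hEX : Real.exp 1 * X ≤ Real.exp X := by
          have h2 := Real.add_one_le_exp (X - 1)
          have h3 : Real.exp (X - 1) * Real.exp 1 = Real.exp X := by
            rw [← Real.exp_add]; ring_nf
          nlinarith [Real.exp_pos 1]
        have hfin : Real.exp (-X) < Real.sin z := by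
          have h3 : Real.exp (-X) * Real.exp X = 1 := by
            rw [← Real.exp_add]; simp
          nlinarith [Real.exp_pos (-X), Real.exp_pos X,
            mul_nonneg (Real.exp_pos (-X)).le (sub_nonneg.mpr hEX),
            mul_pos (mul_pos (Real.exp_pos 1) hX) hsz]
        nlinarith [Real.neg_one_le_sin (Y + z), Real.exp_pos (-X),
          mul_nonneg (Real.exp_pos (-X)).le
            (by linarith [Real.neg_one_le_sin (Y + z)] : (0:ℝ) ≤ Real.sin (Y + z) + 1)]
    have hpos : 0 < 1 / d * s *
        (Real.sin z + Real.exp (-X) * Real.sin (Y + z)) := by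
      have : 0 < 1 / d * s := by positivity
      exact mul_pos this key
    nlinarith [hpos]
  · simp [I]
end

section
/- For 0 ≤ z < π/4 and d > 0, R(z;d) = (1/d)√(cos 2z)[cos z + e^{-X(z;d)} cos(Y(z;d) + z)] satisfies dR/dz ≤ 0, with equality only at z = 0; moreover R(z;d) → 0 and I(z;d) → 0 as z → π/4⁻. -/
set_option maxHeartbeats 2000000
set_option linter.unusedTactic false
set_option linter.unreachableTactic false
set_option linter.unnecessarySeqFocus false
open Real Filter Topology

private lemma expPoly3 {x : ℝ} (hx : 0 ≤ x) : 1 + x + x^2/2 + x^3/6 ≤ Real.exp x := by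
  have h := Real.sum_le_exp_of_nonneg hx 4
  simp [Finset.sum_range_succ, Nat.factorial] at h
  linarith [h]
private lemma expPoly6 {x : ℝ} (hx : 0 ≤ x) :
    1 + x + x^2/2 + x^3/6 + x^4/24 + x^5/120 + x^6/720 ≤ Real.exp x := by
  have h := Real.sum_le_exp_of_nonneg hx 7
  simp [Finset.sum_range_succ, Nat.factorial] at h
  linarith [h]
private lemma sin_lt_cos' {z : ℝ} (h0 : 0 ≤ z) (h4 : z < π/4) :
    Real.sin z < Real.cos z := by
  have hπ := Real.pi_pos
  rw [← Real.sin_pi_div_two_sub]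
  exact Real.strictMonoOn_sin ⟨by linarith, by linarith⟩
    ⟨by linarith, by linarith⟩ (by linarith)

private lemma claimI {z : ℝ} (h0 : 0 < z) (h4 : z < π/4)
    (hsin : 0 < Real.sin z) (hcos : 0 < Real.cos z) :
    Real.exp (-((π - 2*z) * (Real.cos z / Real.sin z))) ≤ 9/20 * z := by
  have hπu : π < 3.141593 := Real.pi_lt_d6
  have hπl : (3.141592:ℝ) < π := Real.pi_gt_d6
  have key : 20/(9*z) ≤ Real.exp ((π - 2*z) * (Real.cos z / Real.sin z)) := by
    have hsz : Real.sin z ≤ z := Real.sin_le h0.le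
    rcases le_or_gt z (2/5) with hz | hz
    · -- small z
      have hz2 : z^2 ≤ (2/5)^2 := by nlinarith
      have hz4 : z^4 ≤ (2/5)^4 := by nlinarith
      have hc1 : 1 - z^2/2 - z^4*(5/96) ≤ Real.cos z := by
        have := Real.cos_bound (x := z) (by rw [abs_of_nonneg h0.le]; linarith)
        rw [abs_of_nonneg h0.le] at this
        have h2 := abs_le.1 this; linarith [h2.1, h2.2]
      have hnum : (0:ℝ) < 1 - z^2/2 - z^4*(5/96) := by nlinarith
      have hcot : (1 - z^2/2 - z^4*(5/96))/z ≤ Real.cos z / Real.sin z := by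
        calc (1 - z^2/2 - z^4*(5/96))/z ≤ Real.cos z / z := by gcongr
          _ ≤ Real.cos z / Real.sin z := by gcongr
      have hq : π/z - 2.64 ≤ (π - 2*z) * (Real.cos z / Real.sin z) := by
        have h3 : π/z - 2.64 ≤ (π - 2*z) * ((1 - z^2/2 - z^4*(5/96))/z) := by
          rw [← sub_nonneg]
          have he : (π - 2*z) * ((1 - z^2/2 - z^4*(5/96))/z) - (π/z - 2.64) =
              ((π - 2*z) * (1 - z^2/2 - z^4*(5/96)) - π + 2.64*z)/z := by
            field_simp; ring
          rw [he]
          apply div_nonneg _ h0.le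
          have hz3 : z^3 ≤ (2/5)^3 := by nlinarith
          have keyz : 0 ≤ 0.64 - π*z/2 - π*z^3*(5/96) := by nlinarith
          have expand : (π - 2*z) * (1 - z^2/2 - z^4*(5/96)) - π + 2.64*z =
              z*(0.64 - π*z/2 - π*z^3*(5/96)) + z^3 + (10/96)*z^5 := by ring
          rw [expand]
          have := mul_nonneg h0.le keyz
          nlinarith [pow_nonneg h0.le 3, pow_nonneg h0.le 5]
        have h5 : (π - 2*z) * ((1 - z^2/2 - z^4*(5/96))/z) ≤
            (π - 2*z) * (Real.cos z / Real.sin z) := by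
          apply mul_le_mul_of_nonneg_left hcot (by linarith)
        linarith
      have hw : (5.21:ℝ) ≤ π/z - 2.64 := by
        have h1 : (3.141592:ℝ)/z ≤ π/z := by gcongr
        have h2 : (3.141592:ℝ)/(2/5) ≤ 3.141592/z := by gcongr <;> norm_num
        norm_num at h2 ⊢
        linarith
      have hmono := Real.exp_le_exp.2 hq
      have hpoly := expPoly3 (x := π/z - 2.64) (by linarith)
      set w := π/z - 2.64 with hwdef
      have hzw : z * (w + 2.64) = π := by
        field_simp [hwdef]; rw [hwdef, sub_add_cancel, mul_div_cancel₀ π h0.ne']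
      have h20 : 20/(9*z) ≤ 1 + w + w^2/2 + w^3/6 := by
        rw [div_le_iff₀ (by linarith : (0:ℝ) < 9*z)]
        nlinarith [hzw, hw, h0, hπl]
      linarith
    · -- z > 2/5 : cot z ≥ 1
      have hcot1 : (1:ℝ) ≤ Real.cos z / Real.sin z := by
        rw [le_div_iff₀ hsin]
        linarith [sin_lt_cos' h0.le h4]
      have hple : π - 2*z ≤ (π - 2*z) * (Real.cos z / Real.sin z) := by
        nlinarith [hcot1, hπl]
      rcases le_or_gt z (1/2) with hz2 | hz2
      · have hpoly := expPoly6 (x := (2.141:ℝ)) (by norm_num)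
        have h2 : Real.exp (2.141:ℝ) ≤ Real.exp ((π - 2*z) * (Real.cos z / Real.sin z)) :=
          Real.exp_le_exp.2 (by linarith)
        have h3 : 20/(9*z) ≤ 50/9 := by
          rw [div_le_div_iff₀ (by linarith) (by norm_num)]; nlinarith
        norm_num at hpoly
        linarith
      · have hpoly := expPoly6 (x := (1.5707:ℝ)) (by norm_num)
        have h2 : Real.exp (1.5707:ℝ) ≤ Real.exp ((π - 2*z) * (Real.cos z / Real.sin z)) :=
          Real.exp_le_exp.2 (by linarith)
        have h3 : 20/(9*z) ≤ 40/9 := by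
          rw [div_le_div_iff₀ (by linarith) (by norm_num)]; nlinarith
        norm_num at hpoly
        linarith
  have hE := Real.exp_pos ((π - 2*z) * (Real.cos z / Real.sin z))
  rw [Real.exp_neg]
  rw [inv_le_comm₀ hE (by linarith : (0:ℝ) < 9/20*z)]
  calc (9/20*z)⁻¹ = 20/(9*z) := by rw [eq_div_iff (by linarith : (9:ℝ)*z ≠ 0)]; field_simp
    _ ≤ _ := key



private lemma texp_mono {c a b : ℝ} (hc : 1 ≤ c*a) (h0 : 0 < a) (hab : a ≤ b) :
    b * Real.exp (-(c*b)) ≤ a * Real.exp (-(c*a)) := by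
  have h2 := Real.add_one_le_exp (c*(b-a))
  have h1 : b ≤ a * Real.exp (c*(b-a)) := by
    nlinarith [mul_le_mul_of_nonneg_left h2 h0.le,
      mul_nonneg (sub_nonneg.2 hc) (sub_nonneg.2 hab)]
  calc b * Real.exp (-(c*b)) ≤ (a * Real.exp (c*(b-a))) * Real.exp (-(c*b)) := by
        apply mul_le_mul_of_nonneg_right h1 (Real.exp_pos _).le
    _ = a * Real.exp (-(c*a)) := by
        rw [mul_assoc, ← Real.exp_add]; ring_nf

-- claim (ii), small z : t e^{-t cos z} ≤ 0.45 z when t sin z > π - 2z, 0 < z ≤ 2/5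
private lemma claimIIa {z t : ℝ} (h0 : 0 < z) (hz : z ≤ 2/5)
    (hsin : 0 < Real.sin z) (hY : π - 2*z < t * Real.sin z) :
    t * Real.exp (-(t * Real.cos z)) ≤ 9/20 * z := by
  have hπu : π < 3.141593 := Real.pi_lt_d6
  have hπl : (3.141592:ℝ) < π := Real.pi_gt_d6
  have hsz : Real.sin z ≤ z := Real.sin_le h0.le
  have hz2 : z^2 ≤ (2/5)^2 := by nlinarith
  have hz4 : z^4 ≤ (2/5)^4 := by nlinarith
  have hc918 : (0.918:ℝ) ≤ Real.cos z := by
    have := Real.cos_bound (x := z) (by rw [abs_of_nonneg h0.le]; linarith)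
    rw [abs_of_nonneg h0.le] at this
    have h2 := abs_le.1 this; linarith [h2.1, h2.2]
  set T : ℝ := (π - 4/5)/z with hTdef
  have hTpos : 0 < T := by rw [hTdef]; exact div_pos (by linarith) h0
  have hT585 : (5.85:ℝ) ≤ T := by
    rw [hTdef, le_div_iff₀ h0]; nlinarith
  have hTt : T ≤ t := by
    have h1 : T * Real.sin z ≤ T * z := by nlinarith
    have h2 : T * z = π - 4/5 := by rw [hTdef]; field_simp
    have h3 : π - 4/5 ≤ π - 2*z := by linarith
    nlinarith
  have htpos : 0 < t := lt_of_lt_of_le hTpos hTt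
  -- step 1 : exp(-(t cos z)) ≤ exp(-(0.918 t))
  have s1 : t * Real.exp (-(t * Real.cos z)) ≤ t * Real.exp (-(0.918*t)) := by
    apply mul_le_mul_of_nonneg_left _ htpos.le
    apply Real.exp_le_exp.2
    nlinarith
  -- step 2 : decreasing
  have s2 : t * Real.exp (-(0.918*t)) ≤ T * Real.exp (-(0.918*T)) := by
    have := texp_mono (c := 0.918) (a := T) (b := t) (by nlinarith) hTpos hTt
    linarith
  -- step 3 : T e^{-0.918T} ≤ 0.45 z
  have s3 : T * Real.exp (-(0.918*T)) ≤ 9/20 * z := by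
    have hpoly := expPoly6 (x := 0.918*T) (by nlinarith)
    have hTz : T * z = π - 4/5 := by rw [hTdef]; field_simp
    -- key : T * (T * exp(-(0.918T))) ≤ 9/20 * (π - 4/5)
    have hkey : T * (T * Real.exp (-(0.918*T))) ≤ 9/20 * (π - 4/5) := by
      rw [Real.exp_neg]
      have hEpos := Real.exp_pos (0.918*T)
      have hre : T * (T * (Real.exp (0.918*T))⁻¹) = T*T/Real.exp (0.918*T) := by ring
      rw [hre, div_le_iff₀ hEpos]
      nlinarith [hpoly, hT585, hπl, mul_nonneg (mul_nonneg hTpos.le hTpos.le)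
        (by linarith : (0:ℝ) ≤ T - 5.85),
        mul_nonneg hTpos.le (by linarith : (0:ℝ) ≤ T - 5.85)]
    have heq : T*(9/20*z) = 9/20 * (π - 4/5) := by rw [← hTz]; ring
    have hkey' : T * (T * Real.exp (-(0.918*T))) ≤ T*(9/20*z) := by linarith
    exact le_of_mul_le_mul_left hkey' hTpos
  linarith [s1, s2, s3]


private lemma expPoly12 {x : ℝ} (hx : 0 ≤ x) :
    1 + x + x^2/2 + x^3/6 + x^4/24 + x^5/120 + x^6/720 + x^7/5040 + x^8/40320 +
      x^9/362880 + x^10/3628800 + x^11/39916800 + x^12/479001600 ≤ Real.exp x := by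
  have h := Real.sum_le_exp_of_nonneg hx 13
  simp [Finset.sum_range_succ, Nat.factorial] at h
  linarith [h]

private lemma sin_ub' {x : ℝ} (h0 : 0 ≤ x) (h1 : x ≤ 1) :
    Real.sin x ≤ x - x^3/6 + x^4*(5/96) := by
  have h := Real.sin_bound (x := x) (by rwa [abs_of_nonneg h0])
  rw [abs_of_nonneg h0] at h
  have h2 := abs_le.1 h
  nlinarith [h2.1, h2.2, pow_nonneg h0 4, mul_nonneg (pow_nonneg h0 4) (sub_nonneg.2 h1)]

private lemma sin_lb' {x : ℝ} (h0 : 0 ≤ x) (h1 : x ≤ 1) :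
    x - x^3/6 - x^4*(5/96) ≤ Real.sin x := by
  have h := Real.sin_bound (x := x) (by rwa [abs_of_nonneg h0])
  rw [abs_of_nonneg h0] at h
  have h2 := abs_le.1 h
  nlinarith [h2.1, h2.2, pow_nonneg h0 4, mul_nonneg (pow_nonneg h0 4) (sub_nonneg.2 h1)]

private lemma cos_lb' {x : ℝ} (h0 : 0 ≤ x) (h1 : x ≤ 1) :
    1 - x^2/2 - x^4*(5/96) ≤ Real.cos x := by
  have h := Real.cos_bound (x := x) (by rwa [abs_of_nonneg h0])
  rw [abs_of_nonneg h0] at h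
  have h2 := abs_le.1 h
  linarith [h2.1, h2.2]


private lemma wbound {p w : ℝ} (hp : 0 ≤ p) (hw : 0 ≤ w) :
    (p + w) * Real.exp (-w) * min 1 w ≤ (p + 1) * Real.exp (-1) := by
  have h1 : w ≤ Real.exp (w-1) := by linarith [Real.add_one_le_exp (w-1)]
  rcases le_or_gt w 1 with hw1 | hw1
  · have h2 : (p+w)*w ≤ (p+1)*Real.exp (w-1) := by nlinarith
    calc (p+w) * Real.exp (-w) * min 1 w = ((p+w)*w) * Real.exp (-w) := by
          rw [min_eq_right hw1]; ring
      _ ≤ ((p+1)*Real.exp (w-1)) * Real.exp (-w) := by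
          apply mul_le_mul_of_nonneg_right h2 (Real.exp_pos _).le
      _ = (p+1) * Real.exp (-1) := by rw [mul_assoc, ← Real.exp_add]; ring_nf
  · have h2 : (p+w) ≤ (p+1)*Real.exp (w-1) := by nlinarith
    calc (p+w) * Real.exp (-w) * min 1 w = (p+w) * Real.exp (-w) := by
          rw [min_eq_left hw1.le]; ring
      _ ≤ ((p+1)*Real.exp (w-1)) * Real.exp (-w) := by
          apply mul_le_mul_of_nonneg_right h2 (Real.exp_pos _).le
      _ = (p+1) * Real.exp (-1) := by rw [mul_assoc, ← Real.exp_add]; ring_nf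

private lemma gridGen {z a slow r : ℝ} (hza : a ≤ z) (ha0 : 0 < a)
    (hslow : slow ≤ Real.sin z) (hslow0 : 0 < slow)
    (hr : r ≤ (π - 2*z) * (Real.cos z / Real.sin z)) (hr0 : 0 ≤ r)
    (hnum : (3.141593 + 1 - 2*a : ℝ) ≤ 9/20 * (a*slow) * 2.7182818 *
      (1 + r + r^2/2 + r^3/6 + r^4/24 + r^5/120 + r^6/720 + r^7/5040 + r^8/40320 +
       r^9/362880 + r^10/3628800 + r^11/39916800 + r^12/479001600)) :
    (π - 2*z + 1) ≤ 9/20 * (z * Real.sin z) * Real.exp 1 *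
      Real.exp ((π - 2*z) * (Real.cos z / Real.sin z)) := by
  have hπu : π < 3.141593 := Real.pi_lt_d6
  have hP := expPoly12 hr0
  have hEr : Real.exp r ≤ Real.exp ((π - 2*z) * (Real.cos z / Real.sin z)) :=
    Real.exp_le_exp.2 hr
  have hE1 : (2.7182818:ℝ) ≤ Real.exp 1 := by
    linarith [Real.exp_one_gt_d9]
  calc π - 2*z + 1 ≤ 3.141593 + 1 - 2*a := by linarith
    _ ≤ 9/20 * (a*slow) * 2.7182818 *
      (1 + r + r^2/2 + r^3/6 + r^4/24 + r^5/120 + r^6/720 + r^7/5040 + r^8/40320 +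
       r^9/362880 + r^10/3628800 + r^11/39916800 + r^12/479001600) := hnum
    _ ≤ 9/20 * (z * Real.sin z) * Real.exp 1 *
      Real.exp ((π - 2*z) * (Real.cos z / Real.sin z)) := by
        have hpoly_pos : (0:ℝ) ≤ 1 + r + r^2/2 + r^3/6 + r^4/24 + r^5/120 + r^6/720 +
            r^7/5040 + r^8/40320 + r^9/362880 + r^10/3628800 + r^11/39916800 +
            r^12/479001600 := by positivity
        have hsz : 0 < Real.sin z := lt_of_lt_of_le hslow0 hslow
        have hz0 : 0 < z := lt_of_lt_of_le ha0 hza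
        have hq1 : (0:ℝ) ≤ z * Real.sin z := mul_nonneg hz0.le hsz.le
        have hq2 : (0:ℝ) ≤ 9/20*(z*Real.sin z) := mul_nonneg (by norm_num) hq1
        have hq3 : (0:ℝ) ≤ 9/20*(z*Real.sin z)*Real.exp 1 :=
          mul_nonneg hq2 (Real.exp_pos 1).le
        gcongr <;> first
          | exact hq3 | exact hq2 | exact hz0.le | exact hza | exact hslow
          | exact hE1 | exact le_trans hP hEr
private lemma claimIIb {z : ℝ} (ha : 2/5 ≤ z) (h4 : z < π/4)
    (hsin0 : 0 < Real.sin z) :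
    (π - 2*z + 1) ≤ 9/20 * (z * Real.sin z) * Real.exp 1 *
      Real.exp ((π - 2*z) * (Real.cos z / Real.sin z)) := by
  have hπu : π < 3.141593 := Real.pi_lt_d6
  have hπl : (3.141592:ℝ) < π := Real.pi_gt_d6
  rcases le_or_gt z (1/2) with hzb | hnext0
  · have hza : (2/5:ℝ) ≤ z := ha
    have hslow : (0.388:ℝ) ≤ Real.sin z := by
      have hmono : Real.sin (2/5) ≤ Real.sin z :=
        Real.strictMonoOn_sin.monotoneOn ⟨by linarith, by linarith⟩
          ⟨by linarith, by linarith⟩ hza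
      have hlb := sin_lb' (x := 2/5) (by norm_num) (by norm_num)
      norm_num at hlb ⊢; linarith
    have hsb : Real.sin z ≤ (0.482422:ℝ) := by
      have h1 : Real.sin z ≤ Real.sin (1/2) :=
        Real.strictMonoOn_sin.monotoneOn ⟨by linarith, by linarith⟩
          ⟨by linarith, by linarith⟩ hzb
      have h2 := sin_ub' (x := 1/2) (by norm_num) (by norm_num)
      norm_num at h2 ⊢; linarith
    have hcb : (0.871744:ℝ) ≤ Real.cos z := by
      have h1 : Real.cos (1/2) ≤ Real.cos z :=
        Real.cos_le_cos_of_nonneg_of_le_pi (by linarith) (by linarith) hzb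
      have h2 := cos_lb' (x := 1/2) (by norm_num) (by norm_num)
      norm_num at h2 ⊢; linarith
    have hcz : (0:ℝ) ≤ Real.cos z := by linarith
    have hq : ((0.871744:ℝ)/(0.482422:ℝ)) ≤ Real.cos z / Real.sin z := by
      calc ((0.871744:ℝ)/(0.482422:ℝ)) ≤ Real.cos z/(0.482422:ℝ) := by gcongr
        _ ≤ Real.cos z / Real.sin z := by gcongr
    have hr : (3.869889:ℝ) ≤ (π - 2*z) * (Real.cos z / Real.sin z) := by
      have hqpos : (0:ℝ) ≤ (0.871744:ℝ)/(0.482422:ℝ) := by norm_num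
      calc (3.869889:ℝ) ≤ (3.141592 - 2*(1/2:ℝ)) * ((0.871744:ℝ)/(0.482422:ℝ)) := by norm_num
        _ ≤ (π - 2*z) * ((0.871744:ℝ)/(0.482422:ℝ)) := by gcongr <;> linarith
        _ ≤ (π - 2*z) * (Real.cos z / Real.sin z) := by gcongr <;> linarith
    exact gridGen hza (by norm_num) hslow (by norm_num) hr (by norm_num) (by norm_num)
  rcases le_or_gt z (3/5) with hzb | hnext1
  · have hza : (1/2:ℝ) ≤ z := by linarith
    have hslow : (0.475911:ℝ) ≤ Real.sin z := by
      have hmono : Real.sin (1/2) ≤ Real.sin z :=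
        Real.strictMonoOn_sin.monotoneOn ⟨by linarith, by linarith⟩
          ⟨by linarith, by linarith⟩ hza
      have hlb := sin_lb' (x := 1/2) (by norm_num) (by norm_num)
      norm_num at hlb ⊢; linarith
    have hsb : Real.sin z ≤ (0.570751:ℝ) := by
      have h1 : Real.sin z ≤ Real.sin (3/5) :=
        Real.strictMonoOn_sin.monotoneOn ⟨by linarith, by linarith⟩
          ⟨by linarith, by linarith⟩ hzb
      have h2 := sin_ub' (x := 3/5) (by norm_num) (by norm_num)
      norm_num at h2 ⊢; linarith
    have hcb : (0.81325:ℝ) ≤ Real.cos z := by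
      have h1 : Real.cos (3/5) ≤ Real.cos z :=
        Real.cos_le_cos_of_nonneg_of_le_pi (by linarith) (by linarith) hzb
      have h2 := cos_lb' (x := 3/5) (by norm_num) (by norm_num)
      norm_num at h2 ⊢; linarith
    have hcz : (0:ℝ) ≤ Real.cos z := by linarith
    have hq : ((0.81325:ℝ)/(0.570751:ℝ)) ≤ Real.cos z / Real.sin z := by
      calc ((0.81325:ℝ)/(0.570751:ℝ)) ≤ Real.cos z/(0.570751:ℝ) := by gcongr
        _ ≤ Real.cos z / Real.sin z := by gcongr
    have hr : (2.766529:ℝ) ≤ (π - 2*z) * (Real.cos z / Real.sin z) := by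
      have hqpos : (0:ℝ) ≤ (0.81325:ℝ)/(0.570751:ℝ) := by norm_num
      calc (2.766529:ℝ) ≤ (3.141592 - 2*(3/5:ℝ)) * ((0.81325:ℝ)/(0.570751:ℝ)) := by norm_num
        _ ≤ (π - 2*z) * ((0.81325:ℝ)/(0.570751:ℝ)) := by gcongr <;> linarith
        _ ≤ (π - 2*z) * (Real.cos z / Real.sin z) := by gcongr <;> linarith
    exact gridGen hza (by norm_num) hslow (by norm_num) hr (by norm_num) (by norm_num)
  rcases le_or_gt z (13/20) with hzb | hnext2
  · have hza : (3/5:ℝ) ≤ z := by linarith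
    have hslow : (0.55725:ℝ) ≤ Real.sin z := by
      have hmono : Real.sin (3/5) ≤ Real.sin z :=
        Real.strictMonoOn_sin.monotoneOn ⟨by linarith, by linarith⟩
          ⟨by linarith, by linarith⟩ hza
      have hlb := sin_lb' (x := 3/5) (by norm_num) (by norm_num)
      norm_num at hlb ⊢; linarith
    have hsb : Real.sin z ≤ (0.613527:ℝ) := by
      have h1 : Real.sin z ≤ Real.sin (13/20) :=
        Real.strictMonoOn_sin.monotoneOn ⟨by linarith, by linarith⟩
          ⟨by linarith, by linarith⟩ hzb
      have h2 := sin_ub' (x := 13/20) (by norm_num) (by norm_num)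
      norm_num at h2 ⊢; linarith
    have hcb : (0.779452:ℝ) ≤ Real.cos z := by
      have h1 : Real.cos (13/20) ≤ Real.cos z :=
        Real.cos_le_cos_of_nonneg_of_le_pi (by linarith) (by linarith) hzb
      have h2 := cos_lb' (x := 13/20) (by norm_num) (by norm_num)
      norm_num at h2 ⊢; linarith
    have hcz : (0:ℝ) ≤ Real.cos z := by linarith
    have hq : ((0.779452:ℝ)/(0.613527:ℝ)) ≤ Real.cos z / Real.sin z := by
      calc ((0.779452:ℝ)/(0.613527:ℝ)) ≤ Real.cos z/(0.613527:ℝ) := by gcongr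
        _ ≤ Real.cos z / Real.sin z := by gcongr
    have hr : (2.33964:ℝ) ≤ (π - 2*z) * (Real.cos z / Real.sin z) := by
      have hqpos : (0:ℝ) ≤ (0.779452:ℝ)/(0.613527:ℝ) := by norm_num
      calc (2.33964:ℝ) ≤ (3.141592 - 2*(13/20:ℝ)) * ((0.779452:ℝ)/(0.613527:ℝ)) := by norm_num
        _ ≤ (π - 2*z) * ((0.779452:ℝ)/(0.613527:ℝ)) := by gcongr <;> linarith
        _ ≤ (π - 2*z) * (Real.cos z / Real.sin z) := by gcongr <;> linarith
    exact gridGen hza (by norm_num) hslow (by norm_num) hr (by norm_num) (by norm_num)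
  rcases le_or_gt z (7/10) with hzb | hnext3
  · have hza : (13/20:ℝ) ≤ z := by linarith
    have hslow : (0.594931:ℝ) ≤ Real.sin z := by
      have hmono : Real.sin (13/20) ≤ Real.sin z :=
        Real.strictMonoOn_sin.monotoneOn ⟨by linarith, by linarith⟩
          ⟨by linarith, by linarith⟩ hza
      have hlb := sin_lb' (x := 13/20) (by norm_num) (by norm_num)
      norm_num at hlb ⊢; linarith
    have hsb : Real.sin z ≤ (0.655339:ℝ) := by
      have h1 : Real.sin z ≤ Real.sin (7/10) :=
        Real.strictMonoOn_sin.monotoneOn ⟨by linarith, by linarith⟩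
          ⟨by linarith, by linarith⟩ hzb
      have h2 := sin_ub' (x := 7/10) (by norm_num) (by norm_num)
      norm_num at h2 ⊢; linarith
    have hcb : (0.742494:ℝ) ≤ Real.cos z := by
      have h1 : Real.cos (7/10) ≤ Real.cos z :=
        Real.cos_le_cos_of_nonneg_of_le_pi (by linarith) (by linarith) hzb
      have h2 := cos_lb' (x := 7/10) (by norm_num) (by norm_num)
      norm_num at h2 ⊢; linarith
    have hcz : (0:ℝ) ≤ Real.cos z := by linarith
    have hq : ((0.742494:ℝ)/(0.655339:ℝ)) ≤ Real.cos z / Real.sin z := by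
      calc ((0.742494:ℝ)/(0.655339:ℝ)) ≤ Real.cos z/(0.655339:ℝ) := by gcongr
        _ ≤ Real.cos z / Real.sin z := by gcongr
    have hr : (1.97321:ℝ) ≤ (π - 2*z) * (Real.cos z / Real.sin z) := by
      have hqpos : (0:ℝ) ≤ (0.742494:ℝ)/(0.655339:ℝ) := by norm_num
      calc (1.97321:ℝ) ≤ (3.141592 - 2*(7/10:ℝ)) * ((0.742494:ℝ)/(0.655339:ℝ)) := by norm_num
        _ ≤ (π - 2*z) * ((0.742494:ℝ)/(0.655339:ℝ)) := by gcongr <;> linarith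
        _ ≤ (π - 2*z) * (Real.cos z / Real.sin z) := by gcongr <;> linarith
    exact gridGen hza (by norm_num) hslow (by norm_num) hr (by norm_num) (by norm_num)
  rcases le_or_gt z (73/100) with hzb | hnext4
  · have hza : (7/10:ℝ) ≤ z := by linarith
    have hslow : (0.630328:ℝ) ≤ Real.sin z := by
      have hmono : Real.sin (7/10) ≤ Real.sin z :=
        Real.strictMonoOn_sin.monotoneOn ⟨by linarith, by linarith⟩
          ⟨by linarith, by linarith⟩ hza
      have hlb := sin_lb' (x := 7/10) (by norm_num) (by norm_num)
      norm_num at hlb ⊢; linarith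
    have hsb : Real.sin z ≤ (0.679955:ℝ) := by
      have h1 : Real.sin z ≤ Real.sin (73/100) :=
        Real.strictMonoOn_sin.monotoneOn ⟨by linarith, by linarith⟩
          ⟨by linarith, by linarith⟩ hzb
      have h2 := sin_ub' (x := 73/100) (by norm_num) (by norm_num)
      norm_num at h2 ⊢; linarith
    have hcb : (0.718759:ℝ) ≤ Real.cos z := by
      have h1 : Real.cos (73/100) ≤ Real.cos z :=
        Real.cos_le_cos_of_nonneg_of_le_pi (by linarith) (by linarith) hzb
      have h2 := cos_lb' (x := 73/100) (by norm_num) (by norm_num)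
      norm_num at h2 ⊢; linarith
    have hcz : (0:ℝ) ≤ Real.cos z := by linarith
    have hq : ((0.718759:ℝ)/(0.679955:ℝ)) ≤ Real.cos z / Real.sin z := by
      calc ((0.718759:ℝ)/(0.679955:ℝ)) ≤ Real.cos z/(0.679955:ℝ) := by gcongr
        _ ≤ Real.cos z / Real.sin z := by gcongr
    have hr : (1.777557:ℝ) ≤ (π - 2*z) * (Real.cos z / Real.sin z) := by
      have hqpos : (0:ℝ) ≤ (0.718759:ℝ)/(0.679955:ℝ) := by norm_num
      calc (1.777557:ℝ) ≤ (3.141592 - 2*(73/100:ℝ)) * ((0.718759:ℝ)/(0.679955:ℝ)) := by norm_num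
        _ ≤ (π - 2*z) * ((0.718759:ℝ)/(0.679955:ℝ)) := by gcongr <;> linarith
        _ ≤ (π - 2*z) * (Real.cos z / Real.sin z) := by gcongr <;> linarith
    exact gridGen hza (by norm_num) hslow (by norm_num) hr (by norm_num) (by norm_num)
  rcases le_or_gt z (19/25) with hzb | hnext5
  · have hza : (73/100:ℝ) ≤ z := by linarith
    have hslow : (0.650373:ℝ) ≤ Real.sin z := by
      have hmono : Real.sin (73/100) ≤ Real.sin z :=
        Real.strictMonoOn_sin.monotoneOn ⟨by linarith, by linarith⟩
          ⟨by linarith, by linarith⟩ hza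
      have hlb := sin_lb' (x := 73/100) (by norm_num) (by norm_num)
      norm_num at hlb ⊢; linarith
    have hq : (1:ℝ) ≤ Real.cos z / Real.sin z := by
      rw [le_div_iff₀ hsin0]
      linarith [sin_lt_cos' (by linarith : (0:ℝ) ≤ z) h4]
    have hp1 : (1.621592:ℝ) ≤ π - 2*z := by linarith
    have hr : (1.621592:ℝ) ≤ (π - 2*z) * (Real.cos z / Real.sin z) := by
      calc (1.621592:ℝ) ≤ (π - 2*z) * 1 := by linarith
        _ ≤ (π - 2*z) * (Real.cos z / Real.sin z) := by gcongr <;> linarith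
    exact gridGen hza (by norm_num) hslow (by norm_num) hr (by norm_num) (by norm_num)
  have hza : (19/25:ℝ) ≤ z := by linarith
  have hslow : (0.669461:ℝ) ≤ Real.sin z := by
    have hmono : Real.sin (19/25) ≤ Real.sin z :=
      Real.strictMonoOn_sin.monotoneOn ⟨by linarith, by linarith⟩
        ⟨by linarith, by linarith⟩ hza
    have hlb := sin_lb' (x := 19/25) (by norm_num) (by norm_num)
    norm_num at hlb ⊢; linarith
  have hq : (1:ℝ) ≤ Real.cos z / Real.sin z := by
    rw [le_div_iff₀ hsin0]
    linarith [sin_lt_cos' (by linarith : (0:ℝ) ≤ z) h4]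
  have hp1 : (1.570796:ℝ) ≤ π - 2*z := by linarith
  have hr : (1.570796:ℝ) ≤ (π - 2*z) * (Real.cos z / Real.sin z) := by
    calc (1.570796:ℝ) ≤ (π - 2*z) * 1 := by linarith
      _ ≤ (π - 2*z) * (Real.cos z / Real.sin z) := by gcongr <;> linarith
  exact gridGen hza (by norm_num) hslow (by norm_num) hr (by norm_num) (by norm_num)

private lemma basics {z : ℝ} (h0 : 0 < z) (h4 : z < π/4) :
    0 < Real.sin z ∧ 0 < Real.cos z ∧ 0 < Real.cos (2*z) ∧ 0 < Real.sin (3*z) := by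
  have hπ := Real.pi_pos
  refine ⟨Real.sin_pos_of_pos_of_lt_pi h0 (by linarith),
    Real.cos_pos_of_mem_Ioo ⟨by linarith, by linarith⟩,
    Real.cos_pos_of_mem_Ioo ⟨by linarith, by linarith⟩,
    Real.sin_pos_of_pos_of_lt_pi (by linarith) (by linarith)⟩

private lemma sin3_eq (z : ℝ) : Real.sin (3*z) = 2 * Real.sin z * Real.cos (2*z) + Real.sin z := by
  have h : (3:ℝ)*z = 2*z + z := by ring
  rw [h, Real.sin_add, Real.sin_two_mul, Real.cos_two_mul]
  nlinarith [Real.sin_sq_add_cos_sq z]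

private lemma sin3_ge {z : ℝ} (h0 : 0 ≤ z) (h4 : z < π/4) : 9/10 * z ≤ Real.sin (3*z) := by
  have hπ := Real.pi_pos
  have hπu : π < 3.141593 := Real.pi_lt_d6
  have hπl : (3.141592:ℝ) < π := Real.pi_gt_d6
  rcases le_or_gt (3*z) (π/2) with h | h
  · have h5 := Real.mul_le_sin (x := 3*z) (by linarith) h
    have h7 : (2:ℝ)/π*(3*z) = 6*z/π := by ring
    rw [h7] at h5
    have h6 : (9:ℝ)/10 * z ≤ 6*z/π := by
      rw [le_div_iff₀ hπ]; nlinarith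
    linarith
  · have h1 : Real.sin (3*z) = Real.cos (3*z - π/2) := by
      rw [← Real.cos_neg, neg_sub, Real.cos_pi_div_two_sub]
    have h2 : Real.cos (π/4) ≤ Real.cos (3*z - π/2) :=
      Real.cos_le_cos_of_nonneg_of_le_pi (by linarith) (by linarith) (by linarith)
    have h3 : Real.cos (π/4) = Real.sqrt 2 / 2 := Real.cos_pi_div_four
    have h4' : (1.414213:ℝ) ≤ Real.sqrt 2 := by
      rw [show (1.414213:ℝ) = Real.sqrt (1.414213^2) by
        rw [Real.sqrt_sq]; norm_num]
      exact Real.sqrt_le_sqrt (by norm_num)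
    rw [h1]
    nlinarith

private lemma keyB {z t : ℝ} (h0 : 0 < z) (h4 : z < π/4) (ht : 0 < t) :
    0 < Real.sin (3*z) + Real.exp (-(t * Real.cos z)) * Real.sin (t * Real.sin z + 3*z)
      + t * Real.exp (-(t * Real.cos z)) * Real.sin (t * Real.sin z + 2*z) := by
  obtain ⟨hsin, hcos, hcos2, hsin3⟩ := basics h0 h4
  have hπ := Real.pi_pos
  have hπu : π < 3.141593 := Real.pi_lt_d6
  have hπl : (3.141592:ℝ) < π := Real.pi_gt_d6
  have hEpos : 0 < Real.exp (-(t * Real.cos z)) := Real.exp_pos _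
  have hE1 : Real.exp (-(t * Real.cos z)) ≤ 1 :=
    Real.exp_le_one_iff.2 (by nlinarith)
  set E := Real.exp (-(t * Real.cos z)) with hEdef
  set Y := t * Real.sin z with hYdef
  have hYpos : 0 < Y := mul_pos ht hsin
  rcases le_or_gt (Y + 2*z) π with hu | hu
  · -- Case 1 : u ≤ π
    have hsinu : 0 ≤ Real.sin (Y + 2*z) :=
      Real.sin_nonneg_of_nonneg_of_le_pi (by linarith) hu
    rcases le_or_gt (Y + 3*z) π with hv | hv
    · have hsinv : 0 ≤ Real.sin (Y + 3*z) :=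
        Real.sin_nonneg_of_nonneg_of_le_pi (by linarith) hv
      nlinarith [mul_nonneg hEpos.le hsinv,
        mul_nonneg (mul_nonneg ht.le hEpos.le) hsinu]
    · -- v > π
      have hsv : Real.sin (Y+3*z) = - Real.sin (Y+3*z - π) := by
        have h := Real.sin_add_pi (Y+3*z-π)
        rw [show Y+3*z-π+π = Y+3*z by ring] at h
        linarith
      have hsvnn : 0 ≤ Real.sin (Y+3*z-π) :=
        Real.sin_nonneg_of_nonneg_of_le_pi (by linarith) (by linarith)
      have hmono : Real.sin (Y+3*z-π) ≤ Real.sin z :=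
        Real.strictMonoOn_sin.monotoneOn ⟨by linarith, by linarith⟩
          ⟨by linarith, by linarith⟩ (by linarith)
      have key1 : E * Real.sin (Y+3*z-π) ≤ Real.sin z := by nlinarith
      have h3 := sin3_eq z
      nlinarith [mul_nonneg (mul_nonneg ht.le hEpos.le) hsinu, mul_pos hsin hcos2]
  · -- Case 2 : u > π
    have hYp : π - 2*z < Y := by linarith
    have hqpos : 0 < Real.cos z/Real.sin z := div_pos hcos hsin
    have hYq : Y * (Real.cos z/Real.sin z) = t * Real.cos z := by
      rw [hYdef]; field_simp
    have hXgt : (π - 2*z)*(Real.cos z/Real.sin z) < t * Real.cos z := by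
      have h1 : (π-2*z)*(Real.cos z/Real.sin z) < Y*(Real.cos z/Real.sin z) :=
        mul_lt_mul_of_pos_right hYp hqpos
      linarith
    have hi : E < 9/20*z := by
      have h1 : E < Real.exp (-((π - 2*z)*(Real.cos z/Real.sin z))) := by
        rw [hEdef]; exact Real.exp_lt_exp.2 (by linarith)
      exact lt_of_lt_of_le h1 (claimI h0 h4 hsin hcos)
    have h9 := sin3_ge h0.le h4
    have hsvge : -1 ≤ Real.sin (Y+3*z) := Real.neg_one_le_sin _
    rcases le_or_gt 0 (Real.sin (Y+2*z)) with hsu | hsu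
    · -- sin u ≥ 0
      nlinarith [mul_nonneg (mul_nonneg ht.le hEpos.le) hsu,
        mul_le_mul_of_nonneg_left hsvge hEpos.le]
    · -- sin u < 0
      have hw : 0 < Y - (π - 2*z) := by linarith
      -- -sin u ≤ min 1 (Y+2z-π)
      have hmsu : -Real.sin (Y+2*z) ≤ min 1 (Y+2*z-π) := by
        apply le_min
        · linarith [Real.neg_one_le_sin (Y+2*z)]
        · rcases le_or_gt (Y+2*z) (2*π) with h2π | h2π
          · have hs2 : Real.sin (Y+2*z) = - Real.sin (Y+2*z - π) := by
              have h := Real.sin_add_pi (Y+2*z-π)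
              rw [show Y+2*z-π+π = Y+2*z by ring] at h
              linarith
            have := Real.sin_le (x := Y+2*z-π) (by linarith)
            linarith
          · linarith [Real.neg_one_le_sin (Y+2*z)]
      have hiinum : t * E * (min 1 (Y+2*z-π)) ≤ 9/20*z := by
        have hm1 : min 1 (Y+2*z-π) ≤ 1 := min_le_left _ _
        have hm0 : 0 ≤ min 1 (Y+2*z-π) := le_min (by norm_num) (by linarith)
        rcases le_or_gt z (2/5) with hz | hz
        · have hcl := claimIIa h0 hz hsin (by rw [← hYdef]; linarith)
          nlinarith [mul_nonneg ht.le hEpos.le]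
        · -- grid case
          have hq1 : 1 ≤ Real.cos z/Real.sin z := by
            rw [le_div_iff₀ hsin]
            linarith [sin_lt_cos' h0.le h4]
          have hE2 : E ≤ Real.exp (-((π-2*z)*(Real.cos z/Real.sin z))) *
              Real.exp (-(Y-(π-2*z))) := by
            rw [hEdef, ← Real.exp_add]
            apply Real.exp_le_exp.2
            nlinarith [hYq]
          have ht_eq : t = Y / Real.sin z := by
            rw [hYdef]; field_simp
          have hs1 : t * E * min 1 (Y+2*z-π) ≤
              (Y/Real.sin z) * (Real.exp (-((π-2*z)*(Real.cos z/Real.sin z))) *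
                Real.exp (-(Y-(π-2*z)))) * min 1 (Y+2*z-π) := by
            rw [← ht_eq]
            have htE : 0 ≤ t := ht.le
            gcongr
          have hs2 : (Y/Real.sin z) * (Real.exp (-((π-2*z)*(Real.cos z/Real.sin z))) *
                Real.exp (-(Y-(π-2*z)))) * min 1 (Y+2*z-π) =
              (Real.exp (-((π-2*z)*(Real.cos z/Real.sin z)))/Real.sin z) *
                (((π-2*z) + (Y-(π-2*z))) * Real.exp (-(Y-(π-2*z))) * min 1 (Y-(π-2*z))) := by
            rw [show Y+2*z-π = Y-(π-2*z) by ring]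
            ring
          have hppos : (0:ℝ) < π - 2*z := by linarith
          have hs3 := wbound (p := π-2*z) (w := Y-(π-2*z)) hppos.le hw.le
          have hfac : 0 ≤ Real.exp (-((π-2*z)*(Real.cos z/Real.sin z)))/Real.sin z :=
            div_nonneg (Real.exp_pos _).le hsin.le
          have hs4 : (Real.exp (-((π-2*z)*(Real.cos z/Real.sin z)))/Real.sin z) *
              ((π-2*z+1) * Real.exp (-1)) ≤ 9/20*z := by
            have hcb := claimIIb (by linarith) h4 hsin
            have hB := Real.exp_pos ((π-2*z)*(Real.cos z/Real.sin z))
            have hA := Real.exp_pos (1:ℝ)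
            rw [Real.exp_neg, Real.exp_neg]
            calc ((Real.exp ((π-2*z)*(Real.cos z/Real.sin z)))⁻¹/Real.sin z) *
                ((π-2*z+1) * (Real.exp 1)⁻¹)
                ≤ ((Real.exp ((π-2*z)*(Real.cos z/Real.sin z)))⁻¹/Real.sin z) *
                ((9/20 * (z * Real.sin z) * Real.exp 1 *
                  Real.exp ((π-2*z)*(Real.cos z/Real.sin z))) * (Real.exp 1)⁻¹) := by
                  gcongr <;>
                    first
                      | exact div_nonneg (inv_nonneg.2 hB.le) hsin.le
                      | exact hcb | positivity
              _ = 9/20*z := by field_simp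
          calc t * E * min 1 (Y+2*z-π) ≤ _ := hs1
            _ = _ := hs2
            _ ≤ (Real.exp (-((π-2*z)*(Real.cos z/Real.sin z)))/Real.sin z) *
                ((π-2*z+1) * Real.exp (-1)) := by
                apply mul_le_mul_of_nonneg_left hs3 hfac
            _ ≤ 9/20*z := hs4
      -- conclude : B ≥ sin3z - E - tE * minterm > 0.9z - 0.45z - 0.45z = 0
      have hfin1 : t*E*(-Real.sin (Y+2*z)) ≤ t*E*(min 1 (Y+2*z-π)) :=
        mul_le_mul_of_nonneg_left hmsu (mul_nonneg ht.le hEpos.le)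
      nlinarith [mul_le_mul_of_nonneg_left hsvge hEpos.le]
private lemma hasDerivR (d z : ℝ) (hd : 0 < d) (hc : 0 < Real.cos (2*z)) :
    HasDerivAt (fun z => (1 / d) * Real.sqrt (Real.cos (2 * z)) *
        (Real.cos z + Real.exp (-(d * Real.cos z / Real.sqrt (Real.cos (2 * z)))) *
          Real.cos (d * Real.sin z / Real.sqrt (Real.cos (2 * z)) + z)))
      (-(1/(d * Real.sqrt (Real.cos (2*z)))) *
        (Real.sin (3*z)
          + Real.exp (-(d * Real.cos z / Real.sqrt (Real.cos (2*z)))) *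
            Real.sin (d * Real.sin z / Real.sqrt (Real.cos (2*z)) + 3*z)
          + (d / Real.sqrt (Real.cos (2*z))) *
            Real.exp (-(d * Real.cos z / Real.sqrt (Real.cos (2*z)))) *
            Real.sin (d * Real.sin z / Real.sqrt (Real.cos (2*z)) + 2*z))) z := by
  have hs : 0 < Real.sqrt (Real.cos (2*z)) := Real.sqrt_pos.2 hc
  have hss : Real.sqrt (Real.cos (2*z)) ^ 2 = Real.cos (2*z) := Real.sq_sqrt hc.le
  have h2z : HasDerivAt (fun y : ℝ => 2*y) 2 z := by
    simpa using (hasDerivAt_id z).const_mul 2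
  have hcos2 : HasDerivAt (fun y => Real.cos (2*y)) (-Real.sin (2*z) * 2) z := h2z.cos
  have hsqrt : HasDerivAt (fun y => Real.sqrt (Real.cos (2*y)))
      ((-Real.sin (2*z) * 2) / (2 * Real.sqrt (Real.cos (2*z)))) z := hcos2.sqrt hc.ne'
  have hX : HasDerivAt (fun y => d * Real.cos y / Real.sqrt (Real.cos (2*y)))
      ((d * -Real.sin z * Real.sqrt (Real.cos (2*z)) -
        d * Real.cos z * ((-Real.sin (2*z) * 2) / (2 * Real.sqrt (Real.cos (2*z))))) /
        Real.sqrt (Real.cos (2*z)) ^ 2) z :=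
    ((Real.hasDerivAt_cos z).const_mul d).div hsqrt hs.ne'
  have hexp := (hX.neg).exp
  have hY : HasDerivAt (fun y => d * Real.sin y / Real.sqrt (Real.cos (2*y)))
      ((d * Real.cos z * Real.sqrt (Real.cos (2*z)) -
        d * Real.sin z * ((-Real.sin (2*z) * 2) / (2 * Real.sqrt (Real.cos (2*z))))) /
        Real.sqrt (Real.cos (2*z)) ^ 2) z :=
    ((Real.hasDerivAt_sin z).const_mul d).div hsqrt hs.ne'
  have hYz := hY.add (hasDerivAt_id' (x := z))
  have hcosYz := hYz.cos
  have hsum := (Real.hasDerivAt_cos z).add (hexp.mul hcosYz)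
  have hfull := (hsqrt.const_mul (1/d)).mul hsum
  refine hfull.congr_deriv ?_
  symm
  simp only [Pi.add_apply, Pi.mul_apply, Pi.neg_apply]
  -- scalar identity
  have e3 : Real.sin (3*z) = Real.sin (2*z)*Real.cos z + Real.cos (2*z)*Real.sin z := by
    rw [show (3:ℝ)*z = 2*z+z by ring, Real.sin_add]
  have eY3 : Real.sin (d * Real.sin z / Real.sqrt (Real.cos (2*z)) + 3*z) =
      Real.sin (d * Real.sin z / Real.sqrt (Real.cos (2*z)) + z)*Real.cos (2*z)
      + Real.cos (d * Real.sin z / Real.sqrt (Real.cos (2*z)) + z)*Real.sin (2*z) := by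
    rw [show d * Real.sin z / Real.sqrt (Real.cos (2*z)) + 3*z =
      (d * Real.sin z / Real.sqrt (Real.cos (2*z)) + z)+2*z by ring, Real.sin_add]
  have eY2 : Real.sin (d * Real.sin z / Real.sqrt (Real.cos (2*z)) + 2*z) =
      Real.sin (d * Real.sin z / Real.sqrt (Real.cos (2*z)) + z)*Real.cos z
      + Real.cos (d * Real.sin z / Real.sqrt (Real.cos (2*z)) + z)*Real.sin z := by
    rw [show d * Real.sin z / Real.sqrt (Real.cos (2*z)) + 2*z =
      (d * Real.sin z / Real.sqrt (Real.cos (2*z)) + z)+z by ring, Real.sin_add]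
  have e2 : Real.sin (2*z) = 2*Real.sin z*Real.cos z := Real.sin_two_mul z
  rw [e3, eY3, eY2, e2]
  set S := Real.sqrt (Real.cos (2*z)) with hSdef
  have h1 : S^2 = 1 - 2*Real.sin z^2 := by rw [hss, Real.cos_two_mul']; nlinarith [Real.sin_sq_add_cos_sq z]
  have h2 : S^2 = 2*Real.cos z^2 - 1 := by rw [hss, Real.cos_two_mul]
  rw [← hss]
  set E := Real.exp (-(d * Real.cos z / S)) with hE
  set P := Real.sin (d * Real.sin z / S + z) with hP
  set Q := Real.cos (d * Real.sin z / S + z) with hQ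
  field_simp [hs.ne', hd.ne']
  linear_combination (Real.cos z*E*P*d) * h1 + (-(Real.sin z*E*Q*d)) * h2
theorem stmt14 (d : ℝ) (hd : 0 < d) :
    let R : ℝ → ℝ := fun z =>
      (1 / d) * Real.sqrt (Real.cos (2 * z)) *
        (Real.cos z + Real.exp (-(d * Real.cos z / Real.sqrt (Real.cos (2 * z)))) *
          Real.cos (d * Real.sin z / Real.sqrt (Real.cos (2 * z)) + z))
    let I : ℝ → ℝ := fun z =>
      -(1 / d) * Real.sqrt (Real.cos (2 * z)) *
        (Real.sin z + Real.exp (-(d * Real.cos z / Real.sqrt (Real.cos (2 * z)))) *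
          Real.sin (d * Real.sin z / Real.sqrt (Real.cos (2 * z)) + z))
    (∀ z ∈ Set.Ico 0 (π / 4), deriv R z ≤ 0 ∧ (deriv R z = 0 ↔ z = 0)) ∧
    Tendsto R (nhdsWithin (π / 4) (Set.Iio (π / 4))) (nhds 0) ∧
    Tendsto I (nhdsWithin (π / 4) (Set.Iio (π / 4))) (nhds 0) := by
  intro R I
  have hπ := Real.pi_pos
  have hR : R = fun z =>
      (1 / d) * Real.sqrt (Real.cos (2 * z)) *
        (Real.cos z + Real.exp (-(d * Real.cos z / Real.sqrt (Real.cos (2 * z)))) *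
          Real.cos (d * Real.sin z / Real.sqrt (Real.cos (2 * z)) + z)) := rfl
  have hI : I = fun z =>
      -(1 / d) * Real.sqrt (Real.cos (2 * z)) *
        (Real.sin z + Real.exp (-(d * Real.cos z / Real.sqrt (Real.cos (2 * z)))) *
          Real.sin (d * Real.sin z / Real.sqrt (Real.cos (2 * z)) + z)) := rfl
  refine ⟨?_, ?_, ?_⟩
  · -- derivative part
    rintro z ⟨hz0, hz4⟩
    have hc : 0 < Real.cos (2*z) :=
      Real.cos_pos_of_mem_Ioo ⟨by linarith, by linarith⟩
    have hD := hasDerivR d z hd hc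
    have hderiv : deriv R z = -(1/(d * Real.sqrt (Real.cos (2*z)))) *
        (Real.sin (3*z)
          + Real.exp (-(d * Real.cos z / Real.sqrt (Real.cos (2*z)))) *
            Real.sin (d * Real.sin z / Real.sqrt (Real.cos (2*z)) + 3*z)
          + (d / Real.sqrt (Real.cos (2*z))) *
            Real.exp (-(d * Real.cos z / Real.sqrt (Real.cos (2*z)))) *
            Real.sin (d * Real.sin z / Real.sqrt (Real.cos (2*z)) + 2*z)) := by
      rw [hR]; exact hD.deriv
    rcases eq_or_lt_of_le hz0 with h0 | h0
    · -- z = 0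
      subst h0
      rw [hderiv]
      norm_num
    · -- z > 0
      have hs : 0 < Real.sqrt (Real.cos (2*z)) := Real.sqrt_pos.2 hc
      have ht : 0 < d / Real.sqrt (Real.cos (2*z)) := div_pos hd hs
      have hB := keyB h0 hz4 ht
      have e1 : (d / Real.sqrt (Real.cos (2*z))) * Real.sin z =
          d * Real.sin z / Real.sqrt (Real.cos (2*z)) := by ring
      have e2 : (d / Real.sqrt (Real.cos (2*z))) * Real.cos z =
          d * Real.cos z / Real.sqrt (Real.cos (2*z)) := by ring
      rw [e1, e2] at hB
      have hpos : 0 < 1/(d*Real.sqrt (Real.cos (2*z))) := by positivity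
      have hDneg : deriv R z < 0 := by
        rw [hderiv]
        have := mul_pos hpos hB
        linarith
      refine ⟨hDneg.le, ⟨fun h => absurd h hDneg.ne, fun h => ?_⟩⟩
      rw [h] at h0; exact absurd h0 (lt_irrefl 0)
  · -- limit of R
    apply squeeze_zero_norm' (a := fun z => (2/d) * Real.sqrt (Real.cos (2*z)))
    · filter_upwards [Ioo_mem_nhdsLT_of_mem
        (show (π/4) ∈ Set.Ioc 0 (π/4) from ⟨by linarith, le_refl _⟩)] with z hz
      obtain ⟨hz0, hz4⟩ := hz
      have hcz : 0 < Real.cos z :=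
        Real.cos_pos_of_mem_Ioo ⟨by linarith, by linarith⟩
      have hs0 : 0 ≤ Real.sqrt (Real.cos (2*z)) := Real.sqrt_nonneg _
      have hXnn : 0 ≤ d * Real.cos z / Real.sqrt (Real.cos (2*z)) := by positivity
      have hE1 : Real.exp (-(d * Real.cos z / Real.sqrt (Real.cos (2*z)))) ≤ 1 :=
        Real.exp_le_one_iff.2 (by linarith)
      have hEpos := Real.exp_pos (-(d * Real.cos z / Real.sqrt (Real.cos (2*z))))
      have hA : |Real.cos z + Real.exp (-(d * Real.cos z / Real.sqrt (Real.cos (2*z)))) *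
          Real.cos (d * Real.sin z / Real.sqrt (Real.cos (2*z)) + z)| ≤ 2 := by
        have h1 := abs_add_le (Real.cos z)
          (Real.exp (-(d * Real.cos z / Real.sqrt (Real.cos (2*z)))) *
            Real.cos (d * Real.sin z / Real.sqrt (Real.cos (2*z)) + z))
        have h2 := Real.abs_cos_le_one z
        have h3 : |Real.exp (-(d * Real.cos z / Real.sqrt (Real.cos (2*z)))) *
            Real.cos (d * Real.sin z / Real.sqrt (Real.cos (2*z)) + z)| ≤ 1 := by
          rw [abs_mul, abs_of_pos hEpos]
          have h4 := Real.abs_cos_le_one (d * Real.sin z / Real.sqrt (Real.cos (2*z)) + z)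
          nlinarith [abs_nonneg (Real.cos (d * Real.sin z / Real.sqrt (Real.cos (2*z)) + z))]
        linarith
      rw [hR]
      simp only [Real.norm_eq_abs]
      rw [abs_mul, abs_mul]
      rw [abs_of_pos (by positivity : (0:ℝ) < 1/d), abs_of_nonneg hs0]
      calc 1/d * Real.sqrt (Real.cos (2*z)) * |_| ≤
          1/d * Real.sqrt (Real.cos (2*z)) * 2 := by gcongr
        _ = 2/d * Real.sqrt (Real.cos (2*z)) := by ring
    · have hcont : Continuous fun z:ℝ => (2/d) * Real.sqrt (Real.cos (2*z)) := by
        fun_prop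
      have h1 := hcont.tendsto (π/4)
      have h2 : (2/d) * Real.sqrt (Real.cos (2*(π/4))) = 0 := by
        rw [show 2*(π/4) = π/2 by ring, Real.cos_pi_div_two, Real.sqrt_zero, mul_zero]
      rw [h2] at h1
      exact h1.mono_left nhdsWithin_le_nhds
  · -- limit of I
    apply squeeze_zero_norm' (a := fun z => (2/d) * Real.sqrt (Real.cos (2*z)))
    · filter_upwards [Ioo_mem_nhdsLT_of_mem
        (show (π/4) ∈ Set.Ioc 0 (π/4) from ⟨by linarith, le_refl _⟩)] with z hz
      obtain ⟨hz0, hz4⟩ := hz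
      have hcz : 0 < Real.cos z :=
        Real.cos_pos_of_mem_Ioo ⟨by linarith, by linarith⟩
      have hs0 : 0 ≤ Real.sqrt (Real.cos (2*z)) := Real.sqrt_nonneg _
      have hXnn : 0 ≤ d * Real.cos z / Real.sqrt (Real.cos (2*z)) := by positivity
      have hE1 : Real.exp (-(d * Real.cos z / Real.sqrt (Real.cos (2*z)))) ≤ 1 :=
        Real.exp_le_one_iff.2 (by linarith)
      have hEpos := Real.exp_pos (-(d * Real.cos z / Real.sqrt (Real.cos (2*z))))
      have hA : |Real.sin z + Real.exp (-(d * Real.cos z / Real.sqrt (Real.cos (2*z)))) *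
          Real.sin (d * Real.sin z / Real.sqrt (Real.cos (2*z)) + z)| ≤ 2 := by
        have h1 := abs_add_le (Real.sin z)
          (Real.exp (-(d * Real.cos z / Real.sqrt (Real.cos (2*z)))) *
            Real.sin (d * Real.sin z / Real.sqrt (Real.cos (2*z)) + z))
        have h2 := Real.abs_sin_le_one z
        have h3 : |Real.exp (-(d * Real.cos z / Real.sqrt (Real.cos (2*z)))) *
            Real.sin (d * Real.sin z / Real.sqrt (Real.cos (2*z)) + z)| ≤ 1 := by
          rw [abs_mul, abs_of_pos hEpos]
          have h4 := Real.abs_sin_le_one (d * Real.sin z / Real.sqrt (Real.cos (2*z)) + z)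
          nlinarith [abs_nonneg (Real.sin (d * Real.sin z / Real.sqrt (Real.cos (2*z)) + z))]
        linarith
      rw [hI]
      simp only [Real.norm_eq_abs]
      rw [abs_mul, abs_mul]
      rw [abs_neg, abs_of_pos (by positivity : (0:ℝ) < 1/d), abs_of_nonneg hs0]
      calc 1/d * Real.sqrt (Real.cos (2*z)) * |_| ≤
          1/d * Real.sqrt (Real.cos (2*z)) * 2 := by gcongr
        _ = 2/d * Real.sqrt (Real.cos (2*z)) := by ring
    · have hcont : Continuous fun z:ℝ => (2/d) * Real.sqrt (Real.cos (2*z)) := by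
        fun_prop
      have h1 := hcont.tendsto (π/4)
      have h2 : (2/d) * Real.sqrt (Real.cos (2*(π/4))) = 0 := by
        rw [show 2*(π/4) = π/2 by ring, Real.cos_pi_div_two, Real.sqrt_zero, mul_zero]
      rw [h2] at h1
      exact h1.mono_left nhdsWithin_le_nhds
end

section
/- Let d > 0, c > 0, and λ = λ_R + iλ_I with λ_I > 0 and 1 + cλ_R > 0. Then Im[d/dλ of g₊(d√(1 + cλ))] > 0, where g₊(w) = (1 + e^{-w})/w and the complex square root is the principal branch. -/
open Complex
open Real
set_option maxHeartbeats 1000000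

lemma numpoly (u : ℝ) (hu : 1.4142135 ≤ u) :
    u^3 + 1.5707965*u^4 < (3*u^2-4)*(4.76*(1+1.1107*(u-1.4142136)/4)^4) := by
  nlinarith [sq_nonneg (u-1.4142135), pow_pos (lt_of_lt_of_le (by norm_num : (0:ℝ)<1.4142135) hu) 3,
    mul_nonneg (mul_nonneg (sub_nonneg.2 hu) (sub_nonneg.2 hu)) (sub_nonneg.2 hu),
    pow_nonneg (sub_nonneg.2 hu) 4, pow_nonneg (sub_nonneg.2 hu) 5, pow_nonneg (sub_nonneg.2 hu) 6]

lemma exp_quart (t : ℝ) (ht : 0 ≤ t) : (1 + t/4)^4 ≤ Real.exp t := by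
  have h1 : 1 + t/4 ≤ Real.exp (t/4) := by have := Real.add_one_le_exp (t/4); linarith
  calc (1+t/4)^4 ≤ (Real.exp (t/4))^4 := by apply pow_le_pow_left₀ (by positivity) h1
    _ = Real.exp ((4:ℕ) * (t/4)) := (Real.exp_nat_mul _ 4).symm
    _ = Real.exp t := by congr 1; push_cast; ring

lemma exp_pi_half : (4.76:ℝ) ≤ Real.exp (π/2) := by
  have h1 : (2.7182818283:ℝ) < Real.exp 1 := Real.exp_one_gt_d9
  have h2 : (0.570796:ℝ) ≤ π/2 - 1 := by have := Real.pi_gt_d6; norm_num at this ⊢; linarith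
  have h3 : (1 + 0.570796/16:ℝ)^16 ≤ Real.exp 0.570796 := by
    have h := Real.add_one_le_exp ((0.570796:ℝ)/16)
    calc (1 + 0.570796/16:ℝ)^16 ≤ (Real.exp (0.570796/16))^16 := by
          apply pow_le_pow_left₀ (by norm_num) (by linarith)
      _ = Real.exp ((16:ℕ) * (0.570796/16)) := (Real.exp_nat_mul _ 16).symm
      _ = Real.exp 0.570796 := by congr 1; push_cast; ring
  have h4 : Real.exp (π/2) = Real.exp 1 * Real.exp (π/2 - 1) := by rw [← Real.exp_add]; ring_nf
  have h5 : Real.exp 0.570796 ≤ Real.exp (π/2 - 1) := Real.exp_le_exp.2 h2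
  have h6 : (1.752:ℝ) ≤ (1 + 0.570796/16:ℝ)^16 := by norm_num
  nlinarith [Real.exp_pos (0.570796:ℝ)]

lemma sqrt2_lb : (1.4142135:ℝ) ≤ Real.sqrt 2 := by
  rw [show (1.4142135:ℝ) = Real.sqrt (1.4142135^2) from (Real.sqrt_sq (by norm_num)).symm]
  exact Real.sqrt_le_sqrt (by norm_num)

lemma sqrt2_ub : Real.sqrt 2 ≤ (1.4142136:ℝ) := by
  rw [show (1.4142136:ℝ) = Real.sqrt (1.4142136^2) from (Real.sqrt_sq (by norm_num)).symm]
  exact Real.sqrt_le_sqrt (by norm_num)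

lemma num_lemma (u : ℝ) (hu : Real.sqrt 2 ≤ u) :
    u^3 + π/2 * u^4 < (3*u^2 - 4) * Real.exp (π * Real.sqrt 2 / 4 * u) := by
  have h2 := sqrt2_lb
  have h3 := sqrt2_ub
  have hu1 : (1.4142135:ℝ) ≤ u := le_trans h2 hu
  have hπl : (3.141592:ℝ) < π := by have := Real.pi_gt_d6; norm_num at this ⊢; linarith
  have hπu : π < (3.141593:ℝ) := by have := Real.pi_lt_d6; norm_num at this ⊢; linarith
  set A := π * Real.sqrt 2 / 4 with hA
  have hA0 : (1.1107:ℝ) ≤ A := by rw [hA]; nlinarith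
  have hsq : Real.sqrt 2 * Real.sqrt 2 = 2 := Real.mul_self_sqrt (by norm_num)
  have hkey : A * u = π/2 + A * (u - Real.sqrt 2) := by rw [hA]; nlinarith [hsq]
  have ht0 : 0 ≤ A * (u - Real.sqrt 2) := by
    apply mul_nonneg (by nlinarith) (by linarith)
  have hexp : Real.exp (A * u) = Real.exp (π/2) * Real.exp (A * (u - Real.sqrt 2)) := by
    rw [hkey, Real.exp_add]
  have hbase : 1.1107*(u-1.4142136)/4 ≤ A * (u - Real.sqrt 2)/4 := by
    nlinarith [mul_nonneg (by linarith : (0:ℝ) ≤ A - 1.1107) (by linarith : (0:ℝ) ≤ u - Real.sqrt 2)]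
  have hbpos : (0:ℝ) < 1 + 1.1107*(u-1.4142136)/4 := by nlinarith
  have hq : (1 + 1.1107*(u-1.4142136)/4)^4 ≤ Real.exp (A * (u - Real.sqrt 2)) := by
    calc (1 + 1.1107*(u-1.4142136)/4)^4 ≤ (1 + A * (u - Real.sqrt 2)/4)^4 := by
          apply pow_le_pow_left₀ (by linarith) (by linarith)
      _ ≤ Real.exp (A * (u - Real.sqrt 2)) := exp_quart _ ht0
  have h34 : (0:ℝ) < 3*u^2 - 4 := by nlinarith
  have hfinal : (3*u^2-4)*(4.76*(1+1.1107*(u-1.4142136)/4)^4) ≤ (3*u^2-4) * Real.exp (A*u) := by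
    rw [hexp]
    have : (4.76:ℝ)*(1+1.1107*(u-1.4142136)/4)^4 ≤ Real.exp (π/2) * Real.exp (A * (u - Real.sqrt 2)) := by
      apply mul_le_mul exp_pi_half hq (by positivity) (le_of_lt (Real.exp_pos _))
    nlinarith
  have hnp := numpoly u hu1
  nlinarith [pow_nonneg (le_trans (by norm_num) hu1) 4]

lemma Cprime (s c r : ℝ) (hs : 0 < s) (hs2 : s^2 ≤ 1/2) (hc : Real.sqrt 2/2 ≤ c)
    (hr : π/2 < r*s) : Real.exp (-(r*c))*(1+r) < 3*s - 4*s^3 := by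
  have hπl : (3.141592:ℝ) < π := by have := Real.pi_gt_d6; norm_num at this ⊢; linarith
  have hπu : π < (3.141593:ℝ) := by have := Real.pi_lt_d6; norm_num at this ⊢; linarith
  have hsq : Real.sqrt 2 * Real.sqrt 2 = 2 := Real.mul_self_sqrt (by norm_num)
  have h2l := sqrt2_lb
  have h2u := sqrt2_ub
  have hsub : s ≤ Real.sqrt 2/2 := by nlinarith
  have hr0pos : 0 < r := by nlinarith
  set r₀ := π/(2*s) with hr₀
  have hrr : r₀ < r := by rw [hr₀, div_lt_iff₀ (by positivity)]; nlinarith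
  have hc0 : (0:ℝ) < c := by nlinarith
  have hr₀lb : (2.22:ℝ) ≤ r₀ := by
    rw [hr₀, le_div_iff₀ (by positivity)]; nlinarith
  have hr₀pos : (0:ℝ) < r₀ := by linarith
  have hcr1 : 1 ≤ c*(1+r₀) := by nlinarith
  -- Step 1: monotonicity in r
  have hmono : 1 + r ≤ (1+r₀) * Real.exp (c*(r - r₀)) := by
    have h1 : c*(r-r₀) + 1 ≤ Real.exp (c*(r-r₀)) := Real.add_one_le_exp _
    have h2 : 1 + r ≤ (1+r₀)*(1+c*(r-r₀)) := by nlinarith [mul_nonneg (by linarith : (0:ℝ) ≤ c*(1+r₀)-1) (by linarith : (0:ℝ) ≤ r - r₀)]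
    nlinarith [Real.exp_pos (c*(r-r₀))]
  have step1 : Real.exp (-(r*c))*(1+r) ≤ Real.exp (-(r₀*c))*(1+r₀) := by
    calc Real.exp (-(r*c))*(1+r) ≤ Real.exp (-(r*c)) * ((1+r₀)*Real.exp (c*(r-r₀))) := by
          apply mul_le_mul_of_nonneg_left hmono (Real.exp_pos _).le
      _ = (Real.exp (-(r*c)) * Real.exp (c*(r-r₀))) * (1+r₀) := by ring
      _ = Real.exp (-(r₀*c))*(1+r₀) := by rw [← Real.exp_add]; congr 2; ring
  -- Step 2
  have hu : Real.sqrt 2 ≤ 1/s := by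
    rw [le_div_iff₀ hs]; nlinarith
  have hnum := num_lemma (1/s) hu
  set E := Real.exp (π * Real.sqrt 2 / 4 * (1/s)) with hE
  have hEpos : 0 < E := Real.exp_pos _
  have key : s + π/2 < (3*s^2-4*s^4)*E := by
    have h4 : (0:ℝ) < s^4 := by positivity
    have := mul_lt_mul_of_pos_right hnum h4
    have e1 : ((1/s)^3 + π/2*(1/s)^4) * s^4 = s + π/2 := by field_simp
    have e2 : ((3*(1/s)^2 - 4) * E) * s^4 = (3*s^2-4*s^4)*E := by field_simp
    calc s + π/2 = ((1/s)^3 + π/2*(1/s)^4) * s^4 := e1.symm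
      _ < ((3*(1/s)^2 - 4) * E) * s^4 := this
      _ = (3*s^2-4*s^4)*E := e2
  have key2 : 1 + r₀ < (3*s-4*s^3)*E := by
    have e1 : (1+π/(2*s))*s = s + π/2 := by field_simp
    have h9 : (1 + r₀) * s < ((3*s-4*s^3)*E) * s := by
      rw [hr₀, e1]; calc s + π/2 < (3*s^2-4*s^4)*E := key
        _ = ((3*s-4*s^3)*E)*s := by ring
    exact lt_of_mul_lt_mul_right (by linarith) hs.le
  have step2 : Real.exp (-(r₀*c))*(1+r₀) < 3*s - 4*s^3 := by
    have hle : Real.exp (-(r₀*c)) ≤ E⁻¹ := by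
      rw [hE, ← Real.exp_neg]
      apply Real.exp_le_exp.2
      have : π * Real.sqrt 2 / 4 * (1/s) ≤ r₀ * c := by
        rw [hr₀]
        calc π * Real.sqrt 2 / 4 * (1/s) = (π/(2*s)) * (Real.sqrt 2/2) := by ring
          _ ≤ (π/(2*s)) * c := by apply mul_le_mul_of_nonneg_left hc (by positivity)
      linarith
    calc Real.exp (-(r₀*c))*(1+r₀) ≤ E⁻¹ * (1+r₀) := by
          apply mul_le_mul_of_nonneg_right hle (by linarith)
      _ < E⁻¹ * ((3*s-4*s^3)*E) := by
          apply mul_lt_mul_of_pos_left key2 (by positivity)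
      _ = (3*s-4*s^3) * (E⁻¹*E) := by ring
      _ = 3*s-4*s^3 := by rw [inv_mul_cancel₀ (ne_of_gt hEpos), mul_one]
  linarith

lemma polar_pos (z r : ℝ) (hz0 : 0 < z) (hz4 : z < π/4) (hr : 0 < r) :
    0 < Real.sin (3*z) + Real.exp (-(r * Real.cos z)) * Real.sin (3*z + r * Real.sin z)
      + r * Real.exp (-(r * Real.cos z)) * Real.sin (2*z + r * Real.sin z) := by
  have hπ : (0:ℝ) < π := Real.pi_pos
  have hz2 : z < π/2 := by linarith
  have hsz : 0 < Real.sin z := Real.sin_pos_of_pos_of_lt_pi hz0 (by linarith)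
  have hcz : 0 < Real.cos z := Real.cos_pos_of_mem_Ioo ⟨by linarith, hz2⟩
  have hs3 : 0 < Real.sin (3*z) := Real.sin_pos_of_pos_of_lt_pi (by linarith) (by linarith)
  set y := r * Real.sin z with hy
  set x := r * Real.cos z with hx
  have hy0 : 0 < y := mul_pos hr hsz
  have hx0 : 0 < x := mul_pos hr hcz
  have hexp1 : Real.exp (-x) < 1 := Real.exp_lt_one_iff.2 (by linarith)
  have hexp0 : 0 < Real.exp (-x) := Real.exp_pos _
  -- sin z < cos z
  have hsc : Real.sin z < Real.cos z := by
    rw [← Real.cos_pi_div_two_sub]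
    exact Real.cos_lt_cos_of_nonneg_of_le_pi (by linarith) (by linarith) (by linarith)
  have hpyth := Real.sin_sq_add_cos_sq z
  have hsin_sq : Real.sin z^2 ≤ 1/2 := by nlinarith
  have hs13 : Real.sin z ≤ Real.sin (3*z) := by
    rw [Real.sin_three_mul]; nlinarith
  rcases le_or_gt (2*z + y) π with h2 | h2
  · rcases le_or_gt (3*z + y) π with h3 | h3
    · -- case a
      have t2 : 0 ≤ Real.sin (3*z + y) := Real.sin_nonneg_of_nonneg_of_le_pi (by linarith) h3
      have t3 : 0 ≤ Real.sin (2*z + y) := Real.sin_nonneg_of_nonneg_of_le_pi (by linarith) h2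
      have := mul_nonneg hexp0.le t2
      have := mul_nonneg (mul_nonneg hr.le hexp0.le) t3
      linarith
    · -- case b
      have t3 : 0 ≤ Real.sin (2*z + y) := Real.sin_nonneg_of_nonneg_of_le_pi (by linarith) h2
      have hteq : Real.sin (3*z + y) = -Real.sin (3*z + y - π) := by
        have h := Real.sin_add_pi (3*z + y - π)
        rw [sub_add_cancel] at h
        linarith
      have htle : Real.sin (3*z + y - π) ≤ Real.sin z := by
        apply (Real.strictMonoOn_sin.monotoneOn) _ _ _
        · exact Set.mem_Icc.2 ⟨by linarith, by linarith⟩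
        · exact Set.mem_Icc.2 ⟨by linarith, by linarith⟩
        · linarith
      have := mul_nonneg (mul_nonneg hr.le hexp0.le) t3
      have h5 : Real.exp (-x) * Real.sin (3*z+y) ≥ -(Real.exp (-x) * Real.sin (3*z)) := by
        rw [hteq]
        have : Real.exp (-x) * Real.sin (3*z + y - π) ≤ Real.exp (-x) * Real.sin (3*z) :=
          mul_le_mul_of_nonneg_left (le_trans htle hs13) hexp0.le
        linarith
      nlinarith
  · -- case c
    have hy2 : π/2 < y := by linarith
    have hcos : Real.sqrt 2/2 ≤ Real.cos z := by
      rw [← Real.cos_pi_div_four]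
      exact le_of_lt (Real.cos_lt_cos_of_nonneg_of_le_pi hz0.le (by linarith) hz4)
    have hC := Cprime (Real.sin z) (Real.cos z) r hsz hsin_sq hcos (by simpa [hy] using hy2)
    have hs3eq : Real.sin (3*z) = 3*Real.sin z - 4*Real.sin z^3 := Real.sin_three_mul z
    have b2 : -1 ≤ Real.sin (3*z + y) := Real.neg_one_le_sin _
    have b3 : -1 ≤ Real.sin (2*z + y) := Real.neg_one_le_sin _
    have e2 : Real.exp (-x) * Real.sin (3*z+y) ≥ -Real.exp (-x) := by nlinarith
    have e3 : r * Real.exp (-x) * Real.sin (2*z+y) ≥ -(r * Real.exp (-x)) := by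
      nlinarith [mul_nonneg (mul_nonneg hr.le hexp0.le) (by linarith : (0:ℝ) ≤ Real.sin (2*z+y) + 1)]
    have hfin : Real.exp (-x) + r * Real.exp (-x) < Real.sin (3*z) := by
      rw [hs3eq, hx]; nlinarith [hC]
    linarith

lemma real_key (x y : ℝ) (hy : 0 < y) (hxy : y < x) :
    Real.exp (-x) * (y*Real.cos y - (x+1)*Real.sin y) * (x^3 - 3*x*y^2)
      - (1 + Real.exp (-x)*((x+1)*Real.cos y + y*Real.sin y)) * (3*x^2*y - y^3) < 0 := by
  have hx : 0 < x := lt_trans hy hxy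
  set r := Real.sqrt (x^2+y^2) with hrdef
  have hr0 : 0 < r := Real.sqrt_pos.2 (by positivity)
  have hr2 : r^2 = x^2 + y^2 := Real.sq_sqrt (by positivity)
  set z := Real.arctan (y/x) with hzdef
  have hz0 : 0 < z := by
    rw [hzdef, ← Real.arctan_zero]
    exact Real.arctan_strictMono (by positivity)
  have hz4 : z < π/4 := by
    rw [hzdef, ← Real.arctan_one]
    exact Real.arctan_strictMono (by rw [div_lt_one hx]; exact hxy)
  have hsqrt : Real.sqrt (1+(y/x)^2) = r/x := by
    rw [show 1+(y/x)^2 = (x^2+y^2)/x^2 by field_simp,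
      Real.sqrt_div (by positivity), Real.sqrt_sq hx.le]
  have hsin : Real.sin z = y/r := by
    rw [hzdef, Real.sin_arctan, hsqrt]
    field_simp
  have hcos : Real.cos z = x/r := by
    rw [hzdef, Real.cos_arctan, hsqrt]
    field_simp
  have hye : r * Real.sin z = y := by rw [hsin]; field_simp
  have hxe : r * Real.cos z = x := by rw [hcos]; field_simp
  have hS := polar_pos z r hz0 hz4 hr0
  rw [hxe, hye] at hS
  have hmul : 0 < r^3 * (Real.sin (3*z) + Real.exp (-x) * Real.sin (3*z + y)
      + r * Real.exp (-x) * Real.sin (2*z + y)) := mul_pos (by positivity) hS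
  have hexpand : r^3 * (Real.sin (3*z) + Real.exp (-x) * Real.sin (3*z + y)
      + r * Real.exp (-x) * Real.sin (2*z + y))
      = (1 + Real.exp (-x)*((x+1)*Real.cos y + y*Real.sin y)) * (3*x^2*y - y^3)
        - Real.exp (-x) * (y*Real.cos y - (x+1)*Real.sin y) * (x^3 - 3*x*y^2) := by
    set ey := Real.exp (-x) with heydef
    set cy := Real.cos y with hcydef
    set sy := Real.sin y with hsydef
    rw [Real.sin_add (3*z) y, Real.sin_add (2*z) y, Real.sin_three_mul, Real.cos_three_mul,
      Real.sin_two_mul, Real.cos_two_mul]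
    rw [← hcydef, ← hsydef, ← hxe, ← hye]
    linear_combination (r^4*ey*sy + 3*Real.cos z*r^3*ey*sy - Real.cos z^2*r^4*ey*sy
      - 3*Real.sin z*r^3 - 3*Real.sin z*r^3*ey*cy - 2*Real.sin z*Real.cos z*r^4*ey*cy
      + Real.sin z^2*r^4*ey*sy) * (Real.sin_sq_add_cos_sq z)
  rw [hexpand] at hmul
  linarith

lemma bridge (w : ℂ) : (((w+1)*Complex.exp (-w) + 1) * (starRingEnd ℂ) (w^3)).im
  = Real.exp (-w.re) * (w.im*Real.cos w.im - (w.re+1)*Real.sin w.im) * (w.re^3 - 3*w.re*w.im^2)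
    - (1 + Real.exp (-w.re)*((w.re+1)*Real.cos w.im + w.im*Real.sin w.im)) * (3*w.re^2*w.im - w.im^3) := by
  simp [Complex.mul_im, Complex.mul_re, Complex.exp_re, Complex.exp_im, pow_succ,
    Real.cos_neg, Real.sin_neg]
  ring

theorem stmt19 (d c lamR lamI : ℝ) (hd : 0 < d) (hc : 0 < c) (hI : 0 < lamI)
    (hρ : 0 < 1 + c * lamR) :
    0 < (deriv (fun lam : ℂ =>
        (1 + Complex.exp (-((d : ℂ) * (1 + (c : ℂ) * lam) ^ ((1 : ℂ) / 2)))) /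
          ((d : ℂ) * (1 + (c : ℂ) * lam) ^ ((1 : ℂ) / 2)))
      ((lamR : ℂ) + (lamI : ℂ) * Complex.I)).im := by
  set lam0 : ℂ := (lamR : ℂ) + (lamI : ℂ) * Complex.I with hlam0
  set u : ℂ := 1 + (c:ℂ) * lam0 with hudef
  have hure : u.re = 1 + c * lamR := by simp [hudef, hlam0]
  have huim : u.im = c * lamI := by simp [hudef, hlam0]
  have huim0 : u.im ≠ 0 := by rw [huim]; positivity
  have hu0 : u ≠ 0 := fun h => huim0 (by rw [h]; rfl)
  set s : ℂ := u ^ ((1:ℂ)/2) with hsdef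
  have hs0 : s ≠ 0 := by
    rw [hsdef, Ne, Complex.cpow_eq_zero_iff]
    rintro ⟨h, -⟩; exact hu0 h
  -- coordinates of s
  have hsre : 0 < s.re := by
    rw [hsdef, Complex.cpow_def_of_ne_zero hu0]
    rw [Complex.exp_re]
    apply mul_pos (Real.exp_pos _)
    apply Real.cos_pos_of_mem_Ioo
    have h1 : (Complex.log u * ((1:ℂ)/2)).im = u.arg / 2 := by
      simp [Complex.mul_im, Complex.log_im]
      ring
    rw [h1]
    have h2 : -π < u.arg := Complex.neg_pi_lt_arg u
    have h4 : u.arg ≠ π := fun h => huim0 (Complex.arg_eq_pi_iff.1 h).2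
    have h3 : u.arg < π := lt_of_le_of_ne ((abs_le.1 (Complex.abs_arg_le_pi u)).2) h4
    constructor <;> [linarith; linarith]
  have hss : s * s = u := by
    rw [hsdef, ← Complex.cpow_add _ _ hu0]
    norm_num
  have hsim : 0 < s.im := by
    have h1 : (s * s).im = u.im := by rw [hss]
    rw [Complex.mul_im] at h1
    nlinarith [huim, mul_pos hc hI]
  have hlt : s.im < s.re := by
    have h1 : (s * s).re = u.re := by rw [hss]
    rw [Complex.mul_re] at h1
    nlinarith [hure]
  -- derivative chain
  have hd0 : (d:ℂ) ≠ 0 := Complex.ofReal_ne_zero.2 hd.ne'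
  set w : ℂ := (d:ℂ) * s with hwdef
  have hw0 : w ≠ 0 := mul_ne_zero hd0 hs0
  set sp : ℂ := (1:ℂ)/2 * u ^ ((1:ℂ)/2 - 1) * (c:ℂ) with hspdef
  have h1 : HasDerivAt (fun lam : ℂ => 1 + (c:ℂ) * lam) (c:ℂ) lam0 := by
    simpa using ((hasDerivAt_id lam0).const_mul (c:ℂ)).const_add 1
  have h2 : HasDerivAt (fun lam : ℂ => (1 + (c:ℂ) * lam) ^ ((1:ℂ)/2)) sp lam0 :=
    h1.cpow_const (Complex.mem_slitPlane_iff.2 (Or.inr huim0))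
  have h3 : HasDerivAt (fun lam : ℂ => (d:ℂ) * (1 + (c:ℂ) * lam) ^ ((1:ℂ)/2))
      ((d:ℂ) * sp) lam0 := h2.const_mul _
  have h5 : HasDerivAt
      (fun lam : ℂ => Complex.exp (-((d:ℂ) * (1 + (c:ℂ) * lam) ^ ((1:ℂ)/2))))
      (Complex.exp (-w) * (-((d:ℂ) * sp))) lam0 := by
    have := (h3.neg).cexp
    simpa [hwdef, hsdef, hudef] using this
  have h6 : HasDerivAt
      (fun lam : ℂ => 1 + Complex.exp (-((d:ℂ) * (1 + (c:ℂ) * lam) ^ ((1:ℂ)/2))))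
      (Complex.exp (-w) * (-((d:ℂ) * sp))) lam0 := h5.const_add 1
  have h7 := h6.div h3 (by simpa [hwdef, hsdef, hudef] using hw0)
  have hDeq : deriv (fun lam : ℂ =>
        (1 + Complex.exp (-((d : ℂ) * (1 + (c : ℂ) * lam) ^ ((1 : ℂ) / 2)))) /
          ((d : ℂ) * (1 + (c : ℂ) * lam) ^ ((1 : ℂ) / 2))) lam0
      = (Complex.exp (-w) * (-((d:ℂ) * sp)) * w
          - (1 + Complex.exp (-w)) * ((d:ℂ) * sp)) / w ^ 2 := by
    have := h7.deriv
    rw [← this]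
    rfl
  rw [hDeq]
  -- simplify the derivative value
  have hcs : u ^ ((1:ℂ)/2 - 1) = s / u := by
    rw [Complex.cpow_sub _ _ hu0, Complex.cpow_one, hsdef]
  have hVal : (Complex.exp (-w) * (-((d:ℂ) * sp)) * w
          - (1 + Complex.exp (-w)) * ((d:ℂ) * sp)) / w ^ 2
      = ((-(c * d^2/2) : ℝ) : ℂ) * (((w+1) * Complex.exp (-w) + 1) / w ^ 3) := by
    rw [hspdef, hcs, hwdef]
    rw [← hss]
    push_cast
    field_simp
    ring
  rw [hVal]
  -- imaginary part
  have hM : (((w+1) * Complex.exp (-w) + 1) / w ^ 3).im < 0 := by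
    have hn : (0:ℝ) < Complex.normSq (w^3) := Complex.normSq_pos.2 (pow_ne_zero 3 hw0)
    have hrw : ((w+1) * Complex.exp (-w) + 1) / w ^ 3
        = (((w+1) * Complex.exp (-w) + 1) * (starRingEnd ℂ) (w^3))
            * ((((Complex.normSq (w^3))⁻¹ : ℝ)) : ℂ) := by
      rw [div_eq_mul_inv, Complex.inv_def]
      ring
    rw [hrw]
    have aux : ∀ (z : ℂ) (t : ℝ), (z * (t:ℂ)).im = z.im * t := fun z t => by simp
    rw [aux]
    apply mul_neg_of_neg_of_pos _ (inv_pos.2 hn)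
    rw [bridge]
    have hx : 0 < w.im := by
      rw [hwdef]; simpa using mul_pos hd hsim
    have hy : w.im < w.re := by
      rw [hwdef]
      simp only [Complex.mul_im, Complex.mul_re, Complex.ofReal_re, Complex.ofReal_im]
      nlinarith
    exact real_key w.re w.im hx hy
  have aux2 : ∀ (t : ℝ) (z : ℂ), ((t:ℂ) * z).im = t * z.im := fun t z => by simp
  rw [aux2]
  have : 0 < c * d^2/2 := by positivity
  nlinarith [hM]
end
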